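/- arXiv:1411.7098 — 6 statements merged into one kernel-verified Lean document; each statement's English description precedes it below -/
import Mathlib

section
/- Let R ⊂ ℝ² and let P ⊂ R be a set at no point of which the contingent of R is the whole plane, i.e. for every x ∈ P there is a unit vector in ℝ² that is not a limit direction of R at x. Then P has σ-finite H^1 measure. -/
open MeasureTheory Metric Set Filter
open scoped ENNReal NNReal Topology RealInnerProductSpace

noncomputable section

/-- A unit vector `d` is a limit direction of `A` at `x`: there is a sequence of points of
`A \ {x}` converging to `x` whose normalized directions from `x` converge to `d`. -/
def IsLimitDirection {E : Type*} [NormedAddCommGroup E] [NormedSpace ℝ E]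
    (A : Set E) (x d : E) : Prop :=
  ‖d‖ = 1 ∧ ∃ y : ℕ → E, (∀ k, y k ∈ A ∧ y k ≠ x) ∧
    Tendsto y atTop (𝓝 x) ∧
    Tendsto (fun k => (‖y k - x‖)⁻¹ • (y k - x)) atTop (𝓝 d)

/-- `A` has a tangent line at `x`: the set of limit directions of `A` at `x` is `{v, -v}`
for some unit vector `v`. -/
def HasTangentLineAt {E : Type*} [NormedAddCommGroup E] [NormedSpace ℝ E]
    (A : Set E) (x : E) : Prop :=
  ∃ v : E, ‖v‖ = 1 ∧ {d | IsLimitDirection A x d} = {v, -v}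

/-- Lower scaled oscillation of `f` at `x`, where `f` is regarded as a map defined on the
metric space `A`:  `liminf_{r→0+} (sup_{y ∈ A, dist x y ≤ r} ‖f y - f x‖) / r`. -/
def lOscOn {E F : Type*} [PseudoMetricSpace E] [NormedAddCommGroup F]
    (f : E → F) (A : Set E) (x : E) : ℝ≥0∞ :=
  Filter.liminf
    (fun r : ℝ => (⨆ y ∈ {y ∈ A | dist x y ≤ r}, (‖f y - f x‖₊ : ℝ≥0∞)) / ENNReal.ofReal r)
    (𝓝[>] (0:ℝ))

/-- Upper scaled oscillation of `f` at `x`, where `f` is regarded as a map defined on the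
metric space `A`:  `limsup_{r→0+} (sup_{y ∈ A, dist x y ≤ r} ‖f y - f x‖) / r`. -/
def uOscOn {E F : Type*} [PseudoMetricSpace E] [NormedAddCommGroup F]
    (f : E → F) (A : Set E) (x : E) : ℝ≥0∞ :=
  Filter.limsup
    (fun r : ℝ => (⨆ y ∈ {y ∈ A | dist x y ≤ r}, (‖f y - f x‖₊ : ℝ≥0∞)) / ENNReal.ofReal r)
    (𝓝[>] (0:ℝ))

/-- The closed unit cube `[0,1]^n` in `ℝ^n`. -/
def unitCube (n : ℕ) : Set (EuclideanSpace ℝ (Fin n)) :=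
  {x | ∀ i, x i ∈ Set.Icc (0:ℝ) 1}

/-- A set has σ-finite `s`-dimensional Hausdorff measure if it is a countable union of
sets of finite `H^s` measure. -/
def SigmaFiniteH {E : Type*} [EMetricSpace E] [MeasurableSpace E] [BorelSpace E]
    (s : ℝ) (C : Set E) : Prop :=
  ∃ F : ℕ → Set E, C = ⋃ k, F k ∧ ∀ k, μH[s] (F k) < ⊤

/-- The Hausdorff measure associated to a gauge function `g`. -/
def gaugeHausdorff {E : Type*} [EMetricSpace E] [MeasurableSpace E] [BorelSpace E]
    (g : ℝ → ℝ) : Measure E :=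
  Measure.mkMetric (fun d : ℝ≥0∞ => ENNReal.ofReal (g d.toReal))

/-- The hyperplane through `x` with normal vector `θ`. -/
def hyperplaneThrough {E : Type*} [NormedAddCommGroup E] [InnerProductSpace ℝ E]
    (θ x : E) : Set E := {y | ⟪y - x, θ⟫ = 0}

/-- `x` is an isolated point of `A`. -/
def IsIsolatedIn {E : Type*} [PseudoMetricSpace E] (x : E) (A : Set E) : Prop :=
  x ∈ A ∧ ∃ r > 0, A ∩ Metric.ball x r = {x}

/-- Concatenation of two Euclidean vectors as a point of `ℝ^{n+m}`. -/
def concatPt {n m : ℕ} (x : EuclideanSpace ℝ (Fin n)) (y : EuclideanSpace ℝ (Fin m)) :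
    EuclideanSpace ℝ (Fin (n + m)) :=
  (EuclideanSpace.equiv (Fin (n + m)) ℝ).symm (Fin.append (fun i => x i) (fun j => y j))

/-- A point of `ℝ^{n+1}` given by a vector in `ℝ^n` and a last (vertical) coordinate. -/
def snocPt {n : ℕ} (x : EuclideanSpace ℝ (Fin n)) (t : ℝ) :
    EuclideanSpace ℝ (Fin (n + 1)) :=
  (EuclideanSpace.equiv (Fin (n + 1)) ℝ).symm (Fin.snoc (fun i => x i) t)

/-!
At a point `x` where the unit vector `d` is not a limit direction of `R`, there are `ε, r > 0`
such that no point of `R` at distance `< r` from `x` lies in the `ε`-cone of directions around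
`d`. Discretising `d`, `ε`, `r` and the position of `x` over countable dense sets covers `P` by
countably many pieces of diameter `< r`, on each of which this holds for one fixed unit `w`. For
two points of a piece the direction between them then avoids both `w` and `-w`, so the
coordinate orthogonal to `w`, namely `x ↦ ω w x` for the area form `ω`, satisfies
`|ω w (x - y)| ≥ ε² / 2 * ‖x - y‖`. It is thus injective with Lipschitz inverse on the piece,
and the piece has finite `H¹` measure because its image is a bounded subset of `ℝ`.
-/

section ConeFree

variable {E : Type*} [NormedAddCommGroup E] [NormedSpace ℝ E]

def coneFreePoints (R : Set E) (w : E) (ε r : ℝ) : Set E :=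
  {x | ∀ y ∈ R, y ≠ x → ‖y - x‖ < r → ε ≤ ‖‖y - x‖⁻¹ • (y - x) - w‖}

theorem exists_mem_coneFreePoints_of_not_isLimitDirection {R : Set E} {x d : E}
    (hd : ‖d‖ = 1) (h : ¬ IsLimitDirection R x d) :
    ∃ ε > 0, ∃ r > 0, x ∈ coneFreePoints R d ε r := by
  by_contra! hcon
  have hseq : ∀ k : ℕ, ∃ y ∈ R, y ≠ x ∧ ‖y - x‖ < 1 / ((k : ℝ) + 1) ∧
      ‖‖y - x‖⁻¹ • (y - x) - d‖ < 1 / ((k : ℝ) + 1) := by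
    intro k
    have hk : (0 : ℝ) < 1 / ((k : ℝ) + 1) := Nat.one_div_pos_of_nat
    simpa [coneFreePoints] using hcon _ hk _ hk
  choose y hyR hyx hy hdir using hseq
  have squeeze : ∀ {u : ℕ → E} {a : E}, (∀ k, ‖u k - a‖ < 1 / ((k : ℝ) + 1)) →
      Tendsto u atTop (𝓝 a) := fun hu =>
    tendsto_iff_norm_sub_tendsto_zero.2 <| squeeze_zero (fun _ => norm_nonneg _)
      (fun k => (hu k).le) tendsto_one_div_add_atTop_nhds_zero_nat
  exact h ⟨hd, y, fun k => ⟨hyR k, hyx k⟩, squeeze hy, squeeze hdir⟩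

theorem coneFreePoints_subset {R : Set E} {d w : E} {ε ε' r r' : ℝ}
    (hε : ε' ≤ ε - ‖w - d‖) (hr : r' ≤ r) :
    coneFreePoints R d ε r ⊆ coneFreePoints R w ε' r' := by
  intro x hx y hy hyx hyr
  have hd := hx y hy hyx (hyr.trans_le hr)
  have htri := norm_sub_le_norm_sub_add_norm_sub (‖y - x‖⁻¹ • (y - x)) w d
  linarith

theorem exists_mem_coneFreePoints_inter_closedBall {R : Set E} {x d : E} (hx : x ∈ R)
    (hd : ‖d‖ = 1) (h : ¬ IsLimitDirection R x d) {w : ℕ → sphere (0 : E) 1} (hw : DenseRange w)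
    {q : ℕ → E} (hq : DenseRange q) : ∃ n i j : ℕ, x ∈ R ∩
      coneFreePoints R (w i) (1 / ((n : ℝ) + 1) / 2) (1 / ((n : ℝ) + 1)) ∩
        closedBall (q j) (1 / ((n : ℝ) + 1) / 4) := by
  obtain ⟨ε, hε, r, hr, hxd⟩ := exists_mem_coneFreePoints_of_not_isLimitDirection hd h
  obtain ⟨n, hn⟩ := exists_nat_one_div_lt (lt_min hε hr)
  set δ := 1 / ((n : ℝ) + 1)
  have hδ : 0 < δ := Nat.one_div_pos_of_nat
  obtain ⟨i, hi⟩ := hw.exists_dist_lt ⟨d, mem_sphere_zero_iff_norm.2 hd⟩ (half_pos hδ)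
  obtain ⟨j, hj⟩ := hq.exists_dist_lt x (by positivity : 0 < δ / 4)
  rw [Subtype.dist_eq, dist_eq_norm, ← norm_neg, neg_sub] at hi
  refine ⟨n, i, j, ⟨hx, coneFreePoints_subset ?_ (hn.le.trans (min_le_right _ _)) hxd⟩, ?_⟩
  · linarith [min_le_left ε r]
  · exact mem_closedBall.2 hj.le

end ConeFree

theorem sigmaFiniteH_of_subset_iUnion {X ι : Type*} [EMetricSpace X] [MeasurableSpace X]
    [BorelSpace X] [Countable ι] [Nonempty ι] {s : ℝ} {C : Set X} {F : ι → Set X}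
    (hC : C ⊆ ⋃ i, F i) (hF : ∀ i, μH[s] (F i) < ⊤) : SigmaFiniteH s C := by
  obtain ⟨e, he⟩ := exists_surjective_nat ι
  refine ⟨fun k => C ∩ F (e k), ?_, fun k => (measure_mono inter_subset_right).trans_lt (hF _)⟩
  rw [← inter_iUnion, he.iUnion_comp F, inter_eq_left.2 hC]

theorem hausdorffMeasure_one_lt_top_of_le_dist {X : Type*} [MetricSpace X] [MeasurableSpace X]
    [BorelSpace X] {f : X → ℝ} {s : Set X} {c : ℝ} (hc : 0 < c)
    (hs : Bornology.IsBounded (f '' s)) (hf : ∀ x ∈ s, ∀ y ∈ s, c * dist x y ≤ dist (f x) (f y)) :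
    μH[1] s < ⊤ := by
  have hanti : AntilipschitzWith (Real.toNNReal c⁻¹) (fun x : s => f x) :=
    AntilipschitzWith.of_le_mul_dist fun x y => by
      rw [Real.coe_toNNReal _ (inv_nonneg.2 hc.le), inv_mul_eq_div, le_div_iff₀ hc, mul_comm]
      exact hf x x.2 y y.2
  calc μH[1] s = μH[1] (univ : Set s) := by
        rw [← (isometry_subtype_coe (s := s)).hausdorffMeasure_image (Or.inl zero_le_one),
          image_univ, Subtype.range_coe]
    _ ≤ (Real.toNNReal c⁻¹ : ℝ≥0∞) ^ (1 : ℝ) * μH[1] ((fun x : s => f x) '' univ) :=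
        hanti.le_hausdorffMeasure_image zero_le_one _
    _ < ⊤ := by
        refine ENNReal.mul_lt_top (by simp) ?_
        rw [image_univ, ← image_eq_range, hausdorffMeasure_real]
        exact hs.measure_lt_top

theorem Orientation.norm_sub_sq_mul_norm_add_sq {E : Type*} [NormedAddCommGroup E]
    [InnerProductSpace ℝ E] [Fact (Module.finrank ℝ E = 2)] (o : Orientation ℝ E (Fin 2))
    (x y : E) :
    ‖x - y‖ ^ 2 * ‖x + y‖ ^ 2 = (‖x‖ ^ 2 - ‖y‖ ^ 2) ^ 2 + 4 * o.areaForm x y ^ 2 := by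
  rw [norm_sub_sq_real, norm_add_sq_real]
  linear_combination (-4) * o.inner_sq_add_areaForm_sq x y

section TwoDim

variable {E : Type*} [NormedAddCommGroup E] [InnerProductSpace ℝ E]
  [Fact (Module.finrank ℝ E = 2)]

theorem Orientation.le_abs_areaForm_of_mem_coneFreePoints (o : Orientation ℝ E (Fin 2))
    {R : Set E} {w x y : E} {ε r : ℝ} (hw : ‖w‖ = 1) (hε : 0 ≤ ε)
    (hx : x ∈ R ∩ coneFreePoints R w ε r) (hy : y ∈ R ∩ coneFreePoints R w ε r)
    (hxy : ‖y - x‖ < r) :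
    ε ^ 2 / 2 * ‖y - x‖ ≤ |o.areaForm w (y - x)| := by
  rcases eq_or_ne y x with rfl | hne
  · simp
  set u := ‖y - x‖⁻¹ • (y - x)
  have hu : ‖u‖ = 1 := norm_smul_inv_norm (sub_ne_zero.2 hne)
  have hminus : ε ≤ ‖u - w‖ := hx.2 y hy.1 hne hxy
  have hplus : ε ≤ ‖u + w‖ := by
    have h := hy.2 x hx.1 hne.symm (by rwa [norm_sub_rev])
    rwa [← neg_sub y x, norm_neg, smul_neg, ← norm_neg, neg_sub', neg_neg, sub_neg_eq_add] at h
  -- for unit vectors `‖u - w‖ * ‖u + w‖` is twice the area of the parallelogram spanned by `w, u`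
  have hprod : ‖u - w‖ * ‖u + w‖ = 2 * |o.areaForm w u| := by
    refine (sq_eq_sq₀ (by positivity) (by positivity)).1 ?_
    rw [mul_pow, mul_pow, sq_abs, norm_sub_rev, add_comm, o.norm_sub_sq_mul_norm_add_sq, hu, hw]
    ring
  have hscale : o.areaForm w (y - x) = ‖y - x‖ * o.areaForm w u := by
    simp only [u, map_smul, smul_eq_mul,
      mul_inv_cancel_left₀ (norm_ne_zero_iff.2 (sub_ne_zero.2 hne))]
  calc ε ^ 2 / 2 * ‖y - x‖ ≤ (‖u - w‖ * ‖u + w‖) / 2 * ‖y - x‖ := by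
        gcongr
        nlinarith [mul_le_mul hminus hplus hε (norm_nonneg _)]
    _ = |o.areaForm w (y - x)| := by
        rw [hprod, hscale, abs_mul, abs_norm]
        ring

theorem hausdorffMeasure_one_coneFreePoints_inter_closedBall_lt_top [MeasurableSpace E]
    [BorelSpace E] (R : Set E) {w : E} (hw : ‖w‖ = 1) {ε r ρ : ℝ} (hε : 0 < ε) (hρ : 2 * ρ < r)
    (q : E) : μH[1] (R ∩ coneFreePoints R w ε r ∩ closedBall q ρ) < ⊤ := by
  have : FiniteDimensional ℝ E := .of_fact_finrank_eq_two
  let o : Orientation ℝ E (Fin 2) := (Module.finBasisOfFinrankEq ℝ E Fact.out).orientation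
  refine hausdorffMeasure_one_lt_top_of_le_dist (f := o.areaForm w) (c := ε ^ 2 / 2)
    (by positivity) ?_ ?_
  · refine (isBounded_closedBall (x := o.areaForm w q) (r := ρ)).subset ?_
    rintro _ ⟨x, hx, rfl⟩
    rw [mem_closedBall, Real.dist_eq, ← map_sub]
    calc |o.areaForm w (x - q)| ≤ ‖w‖ * ‖x - q‖ := o.abs_areaForm_le _ _
      _ ≤ ρ := by rw [hw, one_mul, ← dist_eq_norm]; exact hx.2
  · intro x hx y hy
    have hdist : dist x y < r := by
      linarith [dist_triangle_right x y q, mem_closedBall.1 hx.2, mem_closedBall.1 hy.2]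
    rw [Real.dist_eq, ← map_sub, dist_eq_norm]
    exact o.le_abs_areaForm_of_mem_coneFreePoints hw hε.le hy.1 hx.1 (by rwa [← dist_eq_norm])

end TwoDim

/-- If at no point of `P ⊆ R ⊆ ℝ²` the contingent of `R` is the whole plane,
then `P` has σ-finite `H^1` measure. -/
theorem stmt_3 (R P : Set (EuclideanSpace ℝ (Fin 2))) (hPR : P ⊆ R)
    (h : ∀ x ∈ P, ∃ d : EuclideanSpace ℝ (Fin 2), ‖d‖ = 1 ∧ ¬ IsLimitDirection R x d) :
    SigmaFiniteH 1 P := by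
  have : Fact (Module.finrank ℝ (EuclideanSpace ℝ (Fin 2)) = 2) := ⟨finrank_euclideanSpace_fin⟩
  have : Nonempty (sphere (0 : EuclideanSpace ℝ (Fin 2)) 1) :=
    (NormedSpace.sphere_nonempty.2 zero_le_one).to_subtype
  set w := TopologicalSpace.denseSeq (sphere (0 : EuclideanSpace ℝ (Fin 2)) 1)
  set q := TopologicalSpace.denseSeq (EuclideanSpace ℝ (Fin 2))
  refine sigmaFiniteH_of_subset_iUnion (F := fun p : ℕ × ℕ × ℕ =>
    R ∩ coneFreePoints R (w p.2.1) (1 / ((p.1 : ℝ) + 1) / 2) (1 / ((p.1 : ℝ) + 1)) ∩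
      closedBall (q p.2.2) (1 / ((p.1 : ℝ) + 1) / 4)) ?_ ?_
  · intro x hx
    obtain ⟨d, hd, hnd⟩ := h x hx
    obtain ⟨n, i, j, hmem⟩ := exists_mem_coneFreePoints_inter_closedBall (hPR hx) hd hnd
      (TopologicalSpace.denseRange_denseSeq _) (TopologicalSpace.denseRange_denseSeq _)
    exact mem_iUnion.2 ⟨(n, i, j), hmem⟩
  · rintro ⟨n, i, j⟩
    have hδ : (0 : ℝ) < 1 / ((n : ℝ) + 1) := Nat.one_div_pos_of_nat
    exact hausdorffMeasure_one_coneFreePoints_inter_closedBall_lt_top R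
      (mem_sphere_zero_iff_norm.1 (w i).2) (by positivity) (by linarith) (q j)
end
end

section
/- Let f : ℝ^n → ℝ be a continuous function. Then L_f(x) = ∞ at Lebesgue-almost every point x at which f is non-differentiable; equivalently, the set {x ∈ ℝ^n : f is not differentiable at x and L_f(x) < ∞} has Lebesgue measure zero. -/
/-!
Stepanov's argument. If `L_f(x) < ∞`, then for some `n` the point `x` lies in the closed set of
points `z` with `‖f y - f z‖ ≤ n ‖y - z‖` whenever `‖y - z‖ < 1/(n+1)`; this set is a countable
union of closed pieces on each of which `f` is Lipschitz. On a piece `s`, almost every point `x`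
is a Lebesgue density point at which `f` is differentiable relative to `s` (Rademacher). Density
one forces every nearby `y` to lie within `o(‖y - x‖)` of `s`, and the Lipschitz bound around the
nearest point of `s` then turns the relative derivative into a genuine one.
-/

open MeasureTheory Metric Set Filter
open scoped ENNReal NNReal Topology RealInnerProductSpace

noncomputable section

open Asymptotics

section Oscillation

variable {E F : Type*} [MetricSpace E] [NormedAddCommGroup F]

def localLipschitzSet (f : E → F) (K : ℝ≥0) (ρ : ℝ) : Set E :=
  {x | ∀ y, dist x y < ρ → ‖f y - f x‖ ≤ K * dist x y}

theorem localLipschitzSet_mono {f : E → F} {K K' : ℝ≥0} {ρ ρ' : ℝ} (hK : K ≤ K') (hρ : ρ' ≤ ρ) :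
    localLipschitzSet f K ρ ⊆ localLipschitzSet f K' ρ' := fun _ hx y hy =>
  (hx y (hy.trans_le hρ)).trans (by gcongr)

theorem isClosed_localLipschitzSet {f : E → F} (hf : Continuous f) (K : ℝ≥0) (ρ : ℝ) :
    IsClosed (localLipschitzSet f K ρ) := by
  simp only [localLipschitzSet, ofPred_forall]
  exact isClosed_iInter fun y => isClosed_imp (isOpen_lt (by fun_prop) continuous_const)
    (isClosed_le (by fun_prop) (by fun_prop))

theorem lipschitzOnWith_localLipschitzSet_inter_closedBall {f : E → F} {K : ℝ≥0} {ρ r : ℝ}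
    (c : E) (hr : 2 * r < ρ) : LipschitzOnWith K f (localLipschitzSet f K ρ ∩ closedBall c r) := by
  refine LipschitzOnWith.of_dist_le_mul fun a ha b hb => ?_
  have hab : dist b a < ρ := by
    linarith [dist_triangle_right b a c, mem_closedBall.1 ha.2, mem_closedBall.1 hb.2]
  rw [dist_eq_norm, dist_comm a b]
  exact hb.1 a hab

theorem exists_mem_localLipschitzSet_of_uOscOn_lt_top {f : E → F} {x : E}
    (h : uOscOn f univ x < ⊤) : ∃ n : ℕ, x ∈ localLipschitzSet f n (n + 1 : ℝ)⁻¹ := by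
  obtain ⟨K, hK, -⟩ := ENNReal.lt_iff_exists_nnreal_btwn.1 h
  obtain ⟨ρ, hρ, hratio⟩ := (nhdsGT_basis (0 : ℝ)).eventually_iff.1 (eventually_lt_of_limsup_lt hK)
  have hx : x ∈ localLipschitzSet f K ρ := by
    intro y hy
    rcases eq_or_ne (dist x y) 0 with h0 | h0
    · simp [dist_eq_zero.1 h0]
    have hpos : 0 < dist x y := lt_of_le_of_ne dist_nonneg h0.symm
    have hle : (‖f y - f x‖₊ : ℝ≥0∞) ≤ K * ENNReal.ofReal (dist x y) := by
      refine le_trans ?_ (ENNReal.div_le_iff (ENNReal.ofReal_pos.2 hpos).ne' ENNReal.ofReal_ne_top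
        |>.1 (hratio ⟨hpos, hy⟩).le)
      exact le_biSup (fun y' => (‖f y' - f x‖₊ : ℝ≥0∞))
        (⟨mem_univ y, le_rfl⟩ : y ∈ {y' ∈ univ | dist x y' ≤ dist x y})
    rwa [← ENNReal.ofReal_coe_nnreal, coe_nnnorm, ← ENNReal.ofReal_coe_nnreal (p := K),
      ← ENNReal.ofReal_mul K.coe_nonneg, ENNReal.ofReal_le_ofReal_iff (by positivity)] at hle
  obtain ⟨n, hn⟩ := exists_nat_ge (max (K : ℝ) ρ⁻¹)
  refine ⟨n, localLipschitzSet_mono ?_ ?_ hx⟩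
  · exact_mod_cast (le_max_left _ _).trans hn
  · rw [inv_le_comm₀ (by positivity) hρ]
    linarith [(le_max_right (K : ℝ) ρ⁻¹).trans hn]

end Oscillation

section Differentiability

variable {E F : Type*} [NormedAddCommGroup E] [NormedSpace ℝ E] [NormedAddCommGroup F]
  [NormedSpace ℝ F] {f : E → F} {f' : E →L[ℝ] F} {s : Set E} {x : E}

theorem HasFDerivWithinAt.hasFDerivAt_of_isLittleO_sub_self {π : E → E}
    (hf : HasFDerivWithinAt f f' s x) (hπs : ∀ y, π y ∈ s)
    (hπ : (fun y => π y - y) =o[𝓝 x] (fun y => y - x))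
    (hfπ : (fun y => f y - f (π y)) =O[𝓝 x] (fun y => y - π y)) : HasFDerivAt f f' x := by
  have hπx : Tendsto π (𝓝 x) (𝓝[s] x) := by
    refine tendsto_nhdsWithin_iff.2 ⟨?_, Eventually.of_forall hπs⟩
    have h0 : Tendsto (fun y => π y - y) (𝓝 x) (𝓝 0) :=
      hπ.isBigO.trans_tendsto (tendsto_sub_nhds_zero_iff.2 tendsto_id)
    simpa using h0.add tendsto_id
  have hπx' : (fun y => π y - x) =O[𝓝 x] (fun y => y - x) :=
    (hπ.isBigO.add (isBigO_refl _ _)).congr_left fun y => by abel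
  have hnear : (fun y => f (π y) - f x - f' (π y - x)) =o[𝓝 x] (fun y => y - x) :=
    (hf.isLittleO.comp_tendsto hπx).trans_isBigO hπx'
  have hfar : (fun y => f y - f (π y)) =o[𝓝 x] (fun y => y - x) :=
    hfπ.trans_isLittleO ((hπ.neg_left).congr_left fun y => by abel)
  have hlin : (fun y => f' (π y - y)) =o[𝓝 x] (fun y => y - x) :=
    (f'.isBigO_comp _ _).trans_isLittleO hπ
  refine HasFDerivAt.of_isLittleO (((hfar.add hnear).add hlin).congr_left fun y => ?_)
  simp only [map_sub]
  abel

theorem HasFDerivWithinAt.hasFDerivAt_of_isLittleO_infDist [ProperSpace E] {K ρ : ℝ}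
    (hf : HasFDerivWithinAt f f' s x) (hs : IsClosed s) (hx : x ∈ s)
    (hd : (fun y => infDist y s) =o[𝓝 x] (fun y => y - x)) (hρ : 0 < ρ)
    (hosc : ∀ z ∈ s, ∀ y, dist z y < ρ → ‖f y - f z‖ ≤ K * dist z y) : HasFDerivAt f f' x := by
  choose π hπs hπd using hs.exists_infDist_eq_dist ⟨x, hx⟩
  have hπ : (fun y => π y - y) =o[𝓝 x] (fun y => y - x) :=
    isLittleO_norm_left.1 <| hd.congr_left fun y => by rw [hπd, dist_comm, dist_eq_norm]
  refine hf.hasFDerivAt_of_isLittleO_sub_self hπs hπ (IsBigO.of_bound K ?_)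
  have hclose : ∀ᶠ y in 𝓝 x, π y - y ∈ ball 0 ρ :=
    (hπ.isBigO.trans_tendsto (tendsto_sub_nhds_zero_iff.2 tendsto_id)).eventually
      (ball_mem_nhds 0 hρ)
  filter_upwards [hclose] with y hy
  rw [mem_ball_zero_iff, ← dist_eq_norm] at hy
  rw [← dist_eq_norm y, dist_comm y]
  exact hosc _ (hπs y) y hy

end Differentiability

section Density

theorem measure_inter_div_add_measure_div_le_one {α : Type*} [MeasurableSpace α] (μ : Measure α)
    {s t B : Set α} (ht : MeasurableSet t) (htB : t ⊆ B) (hst : Disjoint s t) :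
    μ (s ∩ B) / μ B + μ t / μ B ≤ 1 := by
  rw [ENNReal.div_add_div_same, ← measure_union (hst.mono_left inter_subset_left) ht]
  exact ENNReal.div_le_of_le_mul ((measure_mono (union_subset inter_subset_right htB)).trans
    (one_mul _).symm.le)

variable {E : Type*} [NormedAddCommGroup E] [NormedSpace ℝ E] [MeasurableSpace E] [BorelSpace E]
  (μ : Measure E) [FiniteDimensional ℝ E] [μ.IsAddHaarMeasure]

theorem addHaar_closedBall_mul_div_addHaar_closedBall (x y : E) {a r : ℝ} (ha : 0 ≤ a)
    (hr : 0 < r) :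
    μ (closedBall y (a * r)) / μ (closedBall x r) = ENNReal.ofReal (a ^ Module.finrank ℝ E) := by
  rw [Measure.addHaar_closedBall_mul μ y ha hr.le, Measure.addHaar_closedBall_center μ x,
    ENNReal.mul_div_cancel_right (measure_closedBall_pos μ 0 hr).ne'
      measure_closedBall_lt_top.ne]

theorem isLittleO_infDist_of_tendsto_measure_inter_div {s : Set E} {x : E} (hx : x ∈ s)
    (h : Tendsto (fun r => μ (s ∩ closedBall x r) / μ (closedBall x r)) (𝓝[>] 0) (𝓝 1)) :
    (fun y => infDist y s) =o[𝓝 x] (fun y => y - x) := by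
  refine isLittleO_iff.2 fun c hc => ?_
  set a := c / (1 + c)
  set η := ENNReal.ofReal (a ^ Module.finrank ℝ E)
  have hη : η ≠ 0 := (ENNReal.ofReal_pos.2 (by positivity)).ne'
  have hdens : ∀ᶠ r in 𝓝[>] 0, 1 < μ (s ∩ closedBall x r) / μ (closedBall x r) + η :=
    (h.add tendsto_const_nhds).eventually (lt_mem_nhds (ENNReal.lt_add_right ENNReal.one_ne_top hη))
  have hscale : Tendsto (fun y => (1 + c) * ‖y - x‖) (𝓝[≠] x) (𝓝[>] 0) := by
    refine tendsto_nhdsWithin_iff.2 ⟨?_, eventually_nhdsWithin_of_forall fun y hy => ?_⟩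
    · exact (Continuous.tendsto' (by fun_prop) x 0 (by simp)).mono_left nhdsWithin_le_nhds
    · have : 0 < ‖y - x‖ := norm_pos_iff.2 (sub_ne_zero.2 hy)
      exact mem_Ioi.2 (by positivity)
  filter_upwards [eventually_nhdsWithin_iff.1 (hscale.eventually hdens)] with y hy
  rcases eq_or_ne y x with rfl | hyx
  · simp [infDist_zero_of_mem hx]
  have ht : 0 < ‖y - x‖ := norm_pos_iff.2 (sub_ne_zero.2 hyx)
  have hac : a * ((1 + c) * ‖y - x‖) = c * ‖y - x‖ := by
    simp only [a]; field_simp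
  by_contra! hlt
  rw [Real.norm_of_nonneg infDist_nonneg] at hlt
  -- otherwise `closedBall y (c‖y - x‖)` misses `s` and fills a fixed proportion `η` of
  -- `closedBall x ((1 + c)‖y - x‖)`, against density one
  have hsub : closedBall y (a * ((1 + c) * ‖y - x‖)) ⊆ closedBall x ((1 + c) * ‖y - x‖) := by
    intro z hz
    rw [hac, mem_closedBall] at hz
    exact mem_closedBall.2 (by linarith [dist_triangle z y x, dist_eq_norm y x])
  have hdisj : Disjoint s (closedBall y (a * ((1 + c) * ‖y - x‖))) := by
    refine disjoint_left.2 fun z hzs hz => ?_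
    rw [hac, mem_closedBall, dist_comm] at hz
    linarith [infDist_le_dist_of_mem (x := y) hzs]
  have hle := measure_inter_div_add_measure_div_le_one μ measurableSet_closedBall hsub hdisj
  rw [addHaar_closedBall_mul_div_addHaar_closedBall μ x y (by positivity) (by positivity)] at hle
  exact (hy hyx).not_ge hle

end Density

section Stepanov

variable {E F : Type*} [NormedAddCommGroup E] [NormedSpace ℝ E] [FiniteDimensional ℝ E]
  [MeasurableSpace E] [BorelSpace E] (μ : Measure E) [μ.IsAddHaarMeasure]
  [NormedAddCommGroup F] [NormedSpace ℝ F] [FiniteDimensional ℝ F] {f : E → F}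

theorem LipschitzOnWith.ae_differentiableAt_of_mem_of_forall_dist_lt {s : Set E} {K : ℝ≥0}
    {ρ : ℝ} (hlip : LipschitzOnWith K f s) (hs : IsClosed s) (hρ : 0 < ρ)
    (hosc : ∀ z ∈ s, ∀ y, dist z y < ρ → ‖f y - f z‖ ≤ K * dist z y) :
    ∀ᵐ x ∂μ, x ∈ s → DifferentiableAt ℝ f x := by
  filter_upwards [hlip.ae_differentiableWithinAt_of_mem (μ := μ),
    (ae_restrict_iff' hs.measurableSet).1 (Besicovitch.ae_tendsto_measure_inter_div μ s)]
    with x hdiff hdens hx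
  exact ((hdiff hx).hasFDerivWithinAt.hasFDerivAt_of_isLittleO_infDist hs hx
    (isLittleO_infDist_of_tendsto_measure_inter_div μ hx (hdens hx)) hρ hosc).differentiableAt

theorem ae_differentiableAt_of_mem_localLipschitzSet (hf : Continuous f) (K : ℝ≥0) {ρ : ℝ}
    (hρ : 0 < ρ) : ∀ᵐ x ∂μ, x ∈ localLipschitzSet f K ρ → DifferentiableAt ℝ f x := by
  set u := TopologicalSpace.denseSeq E
  have hpiece : ∀ j, ∀ᵐ x ∂μ, x ∈ localLipschitzSet f K ρ ∩ closedBall (u j) (ρ / 3) →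
      DifferentiableAt ℝ f x := fun j =>
    LipschitzOnWith.ae_differentiableAt_of_mem_of_forall_dist_lt μ
      (lipschitzOnWith_localLipschitzSet_inter_closedBall (u j) (by linarith))
      ((isClosed_localLipschitzSet hf K ρ).inter isClosed_closedBall) hρ fun z hz => hz.1
  filter_upwards [ae_all_iff.2 hpiece] with x hx hxK
  obtain ⟨j, hj⟩ :=
    (TopologicalSpace.denseRange_denseSeq E).exists_dist_lt x (by positivity : 0 < ρ / 3)
  exact hx j ⟨hxK, hj.le⟩

theorem ae_differentiableAt_of_uOscOn_lt_top (hf : Continuous f) :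
    ∀ᵐ x ∂μ, uOscOn f univ x < ⊤ → DifferentiableAt ℝ f x := by
  have hK := fun n : ℕ => ae_differentiableAt_of_mem_localLipschitzSet μ hf n
    (by positivity : 0 < (n + 1 : ℝ)⁻¹)
  filter_upwards [ae_all_iff.2 hK] with x hx hosc
  obtain ⟨n, hn⟩ := exists_mem_localLipschitzSet_of_uOscOn_lt_top hosc
  exact hx n hn

end Stepanov

/-- (Corollary of Stepanov type) For a continuous `f : ℝ^n → ℝ`, the set of
points where `f` is non-differentiable and the upper scaled oscillation is finite has
Lebesgue measure zero. -/
theorem stmt_5 (n : ℕ) (f : EuclideanSpace ℝ (Fin n) → ℝ) (hf : Continuous f) :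
    volume {x : EuclideanSpace ℝ (Fin n) |
      ¬ DifferentiableAt ℝ f x ∧ uOscOn f Set.univ x < ⊤} = 0 := by
  simpa only [ae_iff, Classical.not_imp, and_comm] using
    ae_differentiableAt_of_uOscOn_lt_top volume hf

end
end

section
/- Let d ≥ 1 and s > 0. There exists a constant b > 0, depending only on s and d, with the following property: for every E ⊂ ℝ^d, every c > 0, and every A ⊂ ℝ such that for each t ∈ A the slice E ∩ {y ∈ ℝ^d : y₁ = t} has H^0 measure (cardinality) greater than c, one has H^s(E) ≥ b·c·H^s(A). -/
open MeasureTheory Metric Set Filter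
open scoped ENNReal NNReal Topology RealInnerProductSpace

noncomputable section

/-!
Let `m = ⌈c⌉` and cover `E` by sets `U` of small diameter. The projection of each `U` lies in two
dyadic intervals of length at most `2 diam U`, and fibre points farther apart than `diam U` lie in
distinct sets `U`. Exhausting `A` by the increasing sets over which `m` fibre points are uniformly
separated, every point of `A` therefore lies in `m` of these dyadic intervals. As two dyadic
intervals are nested or disjoint, such a family splits into `m` subfamilies each covering `A`,
whence `m μH[s] A ≤ 2 * 2 ^ s * μH[s] E`.
-/
def dyadicIco (j k : ℤ) : Set ℝ := Ico (k * 2 ^ j) ((k + 1) * 2 ^ j)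

lemma mem_dyadicIco_iff {j k : ℤ} {x : ℝ} : x ∈ dyadicIco j k ↔ ⌊x / 2 ^ j⌋ = k := by
  have h := zpow_pos (two_pos : (0 : ℝ) < 2) j
  rw [Int.floor_eq_iff, le_div_iff₀ h, div_lt_iff₀ h]
  rfl

lemma dyadicIco_nonempty (j k : ℤ) : (dyadicIco j k).Nonempty :=
  nonempty_Ico.2 <| by nlinarith [zpow_pos (two_pos : (0 : ℝ) < 2) j]

lemma ediam_dyadicIco (j k : ℤ) : ediam (dyadicIco j k) = ENNReal.ofReal (2 ^ j) := by
  rw [dyadicIco, Real.ediam_Ico]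
  ring_nf

lemma floor_div_two_zpow_of_le {j j' : ℤ} (h : j ≤ j') (x : ℝ) :
    ⌊x / 2 ^ j'⌋ = ⌊x / 2 ^ j⌋ / 2 ^ (j' - j).toNat := by
  have hj' : (2 : ℝ) ^ j' = 2 ^ j * ((2 ^ (j' - j).toNat : ℕ) : ℝ) := by
    rw [Nat.cast_pow, Nat.cast_ofNat, ← zpow_natCast, ← zpow_add₀ two_ne_zero]
    congr 1
    omega
  rw [hj', ← div_div, Int.floor_div_natCast]
  norm_cast

lemma dyadicIco_subset_of_le {j j' k k' : ℤ} {x : ℝ} (h : j ≤ j') (hx : x ∈ dyadicIco j k)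
    (hx' : x ∈ dyadicIco j' k') : dyadicIco j k ⊆ dyadicIco j' k' := by
  intro y hy
  rw [mem_dyadicIco_iff] at hx hx' hy ⊢
  rw [floor_div_two_zpow_of_le h, hy, ← hx, ← floor_div_two_zpow_of_le h, hx']

lemma exists_two_zpow_mem_Icc {ρ : ℝ} (hρ : 0 < ρ) : ∃ j : ℤ, ρ ≤ 2 ^ j ∧ 2 ^ j ≤ 2 * ρ := by
  obtain ⟨n, hn, hn'⟩ := exists_mem_Ico_zpow hρ one_lt_two
  exact ⟨n + 1, hn'.le, by rw [zpow_add_one₀ two_ne_zero]; linarith⟩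

lemma exists_subset_dyadicIco_union {S : Set ℝ} {j : ℤ} (h : ediam S ≤ ENNReal.ofReal (2 ^ j)) :
    ∃ k, S ⊆ dyadicIco j k ∪ dyadicIco j (k + 1) := by
  rcases S.eq_empty_or_nonempty with rfl | hne
  · exact ⟨0, empty_subset _⟩
  have hpos := zpow_pos (two_pos : (0 : ℝ) < 2) j
  have hbdd : Bornology.IsBounded S :=
    Metric.isBounded_iff_ediam_ne_top.2 (ne_top_of_le_ne_top ENNReal.ofReal_ne_top h)
  rw [Real.ediam_eq hbdd, ENNReal.ofReal_le_ofReal_iff hpos.le] at h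
  set k := ⌊sInf S / 2 ^ j⌋
  have hk : (k : ℝ) * 2 ^ j ≤ sInf S ∧ sInf S < (k + 1) * 2 ^ j := by
    have := Int.floor_eq_iff.1 (rfl : ⌊sInf S / 2 ^ j⌋ = k)
    rwa [le_div_iff₀ hpos, div_lt_iff₀ hpos] at this
  refine ⟨k, fun x hx => ?_⟩
  obtain ⟨hx₁, hx₂⟩ := hbdd.subset_Icc_sInf_sSup hx
  rw [dyadicIco, dyadicIco, Int.cast_add, Int.cast_one,
    Ico_union_Ico_eq_Ico (by nlinarith) (by nlinarith)]
  exact ⟨by linarith, by linarith⟩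

/-- Dyadic intervals are nested or disjoint, so it suffices to keep one index for each maximal
interval of the family. -/
theorem exists_pairwiseDisjoint_dyadicIco_subfamily {ι : Type*} (J K : ι → ℤ)
    (hJ : BddAbove (range J)) :
    ∃ G : Set ι, G.PairwiseDisjoint (fun i => dyadicIco (J i) (K i)) ∧
      ∀ i, ∃ g ∈ G, dyadicIco (J i) (K i) ⊆ dyadicIco (J g) (K g) := by
  set D : ι → Set ℝ := fun i => dyadicIco (J i) (K i)
  set M : Set ι := {i | Maximal (· ∈ range D) (D i)}
  have hmax : ∀ i, ∃ i' ∈ M, D i ⊆ D i' := by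
    intro i
    obtain ⟨x, hx⟩ := dyadicIco_nonempty (J i) (K i)
    obtain ⟨b, hb⟩ := hJ
    obtain ⟨j, ⟨i', hii', rfl⟩, hj⟩ := Int.exists_greatest_of_bdd
      (P := fun j => ∃ i', D i ⊆ D i' ∧ J i' = j)
      ⟨b, fun _ ⟨i', _, hi'⟩ => hi' ▸ hb (mem_range_self i')⟩ ⟨J i, i, subset_rfl, rfl⟩
    refine ⟨i', ⟨mem_range_self i', ?_⟩, hii'⟩
    rintro _ ⟨i'', rfl⟩ h
    exact dyadicIco_subset_of_le (hj _ ⟨i'', hii'.trans h, rfl⟩) (h (hii' hx)) (hii' hx)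
  obtain ⟨G, hGM, hGinj, hGimage⟩ := (surjOn_image D M).exists_subset_injOn_image_eq
  refine ⟨G, fun g hg g' hg' hne => disjoint_left.2 fun x hx hx' => ?_, fun i => ?_⟩
  · have hne : D g ≠ D g' := fun h => hne (hGinj hg hg' h)
    rcases le_total (J g) (J g') with h | h
    · exact hne ((hGM hg).eq_of_le ⟨g', rfl⟩ (dyadicIco_subset_of_le h hx hx'))
    · exact hne ((hGM hg').eq_of_le ⟨g, rfl⟩ (dyadicIco_subset_of_le h hx' hx)).symm
  · obtain ⟨i', hi'M, hii'⟩ := hmax i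
    obtain ⟨g, hg, hgi'⟩ : D i' ∈ D '' G := hGimage ▸ mem_image_of_mem D hi'M
    exact ⟨g, hg, hii'.trans hgi'.ge⟩

section HausdorffApprox

variable {X : Type*} [EMetricSpace X]

def hausdorffApprox (s : ℝ) (r : ℝ≥0∞) (B : Set X) : ℝ≥0∞ :=
  ⨅ (t : ℕ → Set X) (_ : B ⊆ ⋃ n, t n) (_ : ∀ n, ediam (t n) ≤ r),
    ∑' n, ⨆ _ : (t n).Nonempty, ediam (t n) ^ s

lemma hausdorffMeasure_eq_iSup_hausdorffApprox [MeasurableSpace X] [BorelSpace X] (s : ℝ)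
    (B : Set X) : μH[s] B = ⨆ (r : ℝ≥0∞) (_ : 0 < r), hausdorffApprox s r B :=
  Measure.hausdorffMeasure_apply s B

lemma hausdorffApprox_le_hausdorffMeasure [MeasurableSpace X] [BorelSpace X] {s : ℝ}
    {r : ℝ≥0∞} (hr : 0 < r) (B : Set X) : hausdorffApprox s r B ≤ μH[s] B := by
  rw [hausdorffMeasure_eq_iSup_hausdorffApprox]
  exact le_iSup₂_of_le r hr le_rfl

lemma hausdorffApprox_anti {s : ℝ} {r r' : ℝ≥0∞} (h : r ≤ r') (B : Set X) :
    hausdorffApprox s r' B ≤ hausdorffApprox s r B :=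
  iInf₂_mono fun _ _ => iInf_mono' fun ht => ⟨fun n => (ht n).trans h, le_rfl⟩

lemma hausdorffApprox_le_tsum {ι : Type*} [Countable ι] {s : ℝ} {r : ℝ≥0∞} {B : Set X}
    (t : ι → Set X) (hB : B ⊆ ⋃ i, t i) (ht : ∀ i, ediam (t i) ≤ r) :
    hausdorffApprox s r B ≤ ∑' i, ⨆ _ : (t i).Nonempty, ediam (t i) ^ s := by
  have := Encodable.ofCountable ι
  rw [← tsum_iUnion_decode₂ (fun u : Set X => ⨆ _ : u.Nonempty, ediam u ^ s) (by simp)]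
  refine iInf₂_le_of_le _ ?_ (iInf_le_of_le (fun n => ?_) le_rfl)
  · rwa [Encodable.iUnion_decode₂]
  · exact Encodable.iUnion_decode₂_cases (by simp) ht

lemma hausdorffApprox_le_diff {s : ℝ} (hs : 0 < s) {Z : Set X} (hZ : Z.Countable) (r : ℝ≥0∞)
    (B : Set X) : hausdorffApprox s r B ≤ hausdorffApprox s r (B \ Z) := by
  have := hZ.to_subtype
  refine le_iInf₂ fun t hBt => le_iInf fun ht => ?_
  have hcover : B ⊆ ⋃ i, Sum.elim t (fun z : Z => {z.1}) i := by
    intro x hx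
    by_cases hxZ : x ∈ Z
    · exact mem_iUnion.2 ⟨Sum.inr ⟨x, hxZ⟩, rfl⟩
    · obtain ⟨n, hn⟩ := mem_iUnion.1 (hBt ⟨hx, hxZ⟩)
      exact mem_iUnion.2 ⟨Sum.inl n, hn⟩
  refine (hausdorffApprox_le_tsum _ hcover (Sum.forall.2 ⟨ht, fun _ => by simp⟩)).trans_eq ?_
  rw [Summable.tsum_sum ENNReal.summable ENNReal.summable]
  simp [ENNReal.zero_rpow_of_pos hs]

end HausdorffApprox

lemma bddAbove_range_of_ofReal_two_zpow_le {ι : Type*} {J : ι → ℤ} {r : ℝ≥0∞} (hr : r ≠ ⊤)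
    (h : ∀ i, ENNReal.ofReal (2 ^ J i) ≤ r) : BddAbove (range J) := by
  obtain ⟨N, hN⟩ := pow_unbounded_of_one_lt r.toReal (one_lt_two : (1 : ℝ) < 2)
  refine ⟨N, forall_mem_range.2 fun i => ?_⟩
  have : (2 : ℝ) ^ J i < 2 ^ (N : ℤ) := by
    rw [zpow_natCast]
    exact ((ENNReal.ofReal_le_iff_le_toReal hr).1 (h i)).trans_lt hN
  exact ((zpow_lt_zpow_iff_right₀ one_lt_two).1 this).le

lemma encard_setOf_mem_le_encard_compl_add_one {ι α : Type*} {f : ι → Set α} {G : Set ι}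
    (hG : G.PairwiseDisjoint f) (x : α) :
    {i | x ∈ f i}.encard ≤ {i : ↥Gᶜ | x ∈ f i}.encard + 1 := by
  have hsplit : {i | x ∈ f i} ⊆ Subtype.val '' {i : ↥Gᶜ | x ∈ f i} ∪ {i | i ∈ G ∧ x ∈ f i} := by
    intro i hi
    by_cases hiG : i ∈ G
    · exact Or.inr ⟨hiG, hi⟩
    · exact Or.inl ⟨⟨i, hiG⟩, hi, rfl⟩
  have hG1 : {i | i ∈ G ∧ x ∈ f i}.encard ≤ 1 :=
    encard_le_one_iff.2 fun a b ha hb => hG.elim ha.1 hb.1 (not_disjoint_iff.2 ⟨x, ha.2, hb.2⟩)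
  calc _ ≤ _ := encard_le_encard hsplit
    _ ≤ _ := encard_union_le _ _
    _ ≤ _ := by rw [Subtype.val_injective.encard_image]; gcongr

/-- Peel off a maximal disjoint subfamily: it covers `B` and lowers the multiplicity by one. -/
theorem natCast_mul_hausdorffApprox_le_tsum_dyadicIco {ι : Type*} [Countable ι] (J K : ι → ℤ)
    {s : ℝ} {r : ℝ≥0∞} (hr : r ≠ ⊤) (hJr : ∀ i, ENNReal.ofReal (2 ^ J i) ≤ r) {B : Set ℝ}
    {m : ℕ} (hB : ∀ x ∈ B, (m : ℕ∞) ≤ {i | x ∈ dyadicIco (J i) (K i)}.encard) :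
    m * hausdorffApprox s r B ≤ ∑' i, ENNReal.ofReal (2 ^ J i) ^ s := by
  induction m generalizing ι J K with
  | zero => simp
  | succ m ih =>
    obtain ⟨G, hGdisj, hGmax⟩ := exists_pairwiseDisjoint_dyadicIco_subfamily J K
      (bddAbove_range_of_ofReal_two_zpow_le hr hJr)
    have hG : hausdorffApprox s r B ≤ ∑' g : G, ENNReal.ofReal (2 ^ J g) ^ s := by
      refine (hausdorffApprox_le_tsum (fun g : G => dyadicIco (J g) (K g)) (fun x hx => ?_)
        fun g => (ediam_dyadicIco _ _).trans_le (hJr g)).trans_eq ?_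
      · obtain ⟨i, hi⟩ : {i | x ∈ dyadicIco (J i) (K i)}.Nonempty :=
          encard_pos.1 ((Nat.cast_pos.2 m.succ_pos).trans_le (hB x hx))
        obtain ⟨g, hg, hig⟩ := hGmax i
        exact mem_iUnion.2 ⟨⟨g, hg⟩, hig hi⟩
      · simp [ediam_dyadicIco, dyadicIco_nonempty]
    have hGc : m * hausdorffApprox s r B ≤ ∑' g : ↥Gᶜ, ENNReal.ofReal (2 ^ J g) ^ s :=
      ih (ι := ↥Gᶜ) (fun g => J g) (fun g => K g) (fun g => hJr g) fun x hx => by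
        have := (hB x hx).trans (encard_setOf_mem_le_encard_compl_add_one hGdisj x)
        push_cast at this
        exact (ENat.add_le_add_iff_right ENat.one_ne_top).1 this
    calc ((m + 1 : ℕ) : ℝ≥0∞) * hausdorffApprox s r B
        = m * hausdorffApprox s r B + hausdorffApprox s r B := by push_cast; ring
      _ ≤ ∑' g : ↥Gᶜ, ENNReal.ofReal (2 ^ J g) ^ s + ∑' g : G, ENNReal.ofReal (2 ^ J g) ^ s :=
        add_le_add hGc hG
      _ = ∑' i, ENNReal.ofReal (2 ^ J i) ^ s := by
        rw [add_comm]
        exact Summable.tsum_add_tsum_compl (f := fun i => ENNReal.ofReal (2 ^ J i) ^ s)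
          ENNReal.summable ENNReal.summable

section Slicing

variable {X : Type*} [EMetricSpace X]

lemma exists_image_subset_dyadicIco_union {f : X → ℝ} (hf : LipschitzWith 1 f) {T : Set X}
    (hT₀ : ediam T ≠ 0) (hT : ediam T ≠ ⊤) :
    ∃ j k : ℤ, ENNReal.ofReal (2 ^ j) ≤ 2 * ediam T ∧
      f '' T ⊆ dyadicIco j k ∪ dyadicIco j (k + 1) := by
  obtain ⟨j, hj₁, hj₂⟩ := exists_two_zpow_mem_Icc (ENNReal.toReal_pos hT₀ hT)
  have hfT : ediam (f '' T) ≤ ENNReal.ofReal (2 ^ j) := calc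
    ediam (f '' T) ≤ ediam T := by simpa using hf.ediam_image_le T
    _ = ENNReal.ofReal (ediam T).toReal := (ENNReal.ofReal_toReal hT).symm
    _ ≤ ENNReal.ofReal (2 ^ j) := ENNReal.ofReal_le_ofReal hj₁
  obtain ⟨k, hk⟩ := exists_subset_dyadicIco_union hfT
  refine ⟨j, k, ?_, hk⟩
  calc ENNReal.ofReal (2 ^ j) ≤ ENNReal.ofReal (2 * (ediam T).toReal) :=
        ENNReal.ofReal_le_ofReal hj₂
    _ = 2 * ediam T := by
      rw [ENNReal.ofReal_mul zero_le_two, ENNReal.ofReal_toReal hT, ENNReal.ofReal_ofNat]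

lemma encard_le_encard_dyadicIco_of_isSeparated {f : X → ℝ} {E : Set X} {ε δ : ℝ≥0∞}
    (hδε : δ ≤ ε) {t : ℕ → Set X} (hEt : E ⊆ ⋃ n, t n) (ht : ∀ n, ediam (t n) ≤ δ)
    {j k : {n // ediam (t n) ≠ 0} → ℤ}
    (hk : ∀ n, f '' t n.1 ⊆ dyadicIco (j n) (k n) ∪ dyadicIco (j n) (k n + 1)) {x : ℝ}
    (hx : x ∉ ⋃ n ∈ {n | ediam (t n) = 0}, f '' t n) {F : Set X} (hF : F ⊆ {y ∈ E | f y = x})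
    (hFsep : IsSeparated ε F) :
    F.encard ≤ {i : {n // ediam (t n) ≠ 0} × Bool |
      x ∈ dyadicIco (j i.1) (k i.1 + i.2.toNat)}.encard := by
  have hidx : ∀ y : F, ∃ i : {n // ediam (t n) ≠ 0} × Bool,
      ↑y ∈ t i.1 ∧ x ∈ dyadicIco (j i.1) (k i.1 + i.2.toNat) := by
    rintro ⟨y, hy⟩
    obtain ⟨hyE, rfl⟩ := hF hy
    obtain ⟨n, hn⟩ := mem_iUnion.1 (hEt hyE)
    have hn₀ : ediam (t n) ≠ 0 := fun h => hx (mem_biUnion h (mem_image_of_mem f hn))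
    obtain ⟨b, hb⟩ : ∃ b : Bool, f y ∈ dyadicIco (j ⟨n, hn₀⟩) (k ⟨n, hn₀⟩ + b.toNat) := by
      rcases hk ⟨n, hn₀⟩ (mem_image_of_mem f hn) with h | h
      · exact ⟨false, by simpa using h⟩
      · exact ⟨true, by simpa using h⟩
    exact ⟨(⟨n, hn₀⟩, b), hn, hb⟩
  choose g hgt hgx using hidx
  have hg : Function.Injective g := fun y z hyz => by
    by_contra hne
    have hyz' : edist (y : X) z ≤ δ :=
      (edist_le_ediam_of_mem (hgt y) (hyz ▸ hgt z)).trans (ht _)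
    exact (hFsep y.2 z.2 (Subtype.coe_ne_coe.2 hne)).not_ge (hyz'.trans hδε)
  exact ENat.card_le_card_of_injective (f := fun y => ⟨g y, hgx y⟩)
    fun y z h => hg (congrArg Subtype.val h)

variable {s : ℝ} {f : X → ℝ} {E : Set X} {B : Set ℝ} {m : ℕ} {ε δ : ℝ≥0∞}

/-- The dyadic intervals around the images of the covering sets cover `B` with multiplicity `m`,
except at the countably many images of covering sets of diameter zero. -/
theorem natCast_mul_hausdorffApprox_le_tsum_of_isSeparated (hs : 0 < s) (hf : LipschitzWith 1 f)
    (hδ : δ ≠ ⊤) (hδε : δ ≤ ε)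
    (hB : ∀ x ∈ B, ∃ F ⊆ {y ∈ E | f y = x}, (m : ℕ∞) ≤ F.encard ∧ IsSeparated ε F)
    (t : ℕ → Set X) (hEt : E ⊆ ⋃ n, t n) (ht : ∀ n, ediam (t n) ≤ δ) :
    m * hausdorffApprox s (2 * δ) B ≤
      2 * 2 ^ s * ∑' n, ⨆ _ : (t n).Nonempty, ediam (t n) ^ s := by
  set P := {n // ediam (t n) ≠ 0}
  choose j k hj hk using fun n : P =>
    exists_image_subset_dyadicIco_union hf n.2 (ne_top_of_le_ne_top hδ (ht n))
  set J : P × Bool → ℤ := fun i => j i.1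
  set K : P × Bool → ℤ := fun i => k i.1 + i.2.toNat
  set Z : Set ℝ := ⋃ n ∈ {n | ediam (t n) = 0}, f '' t n
  have hZ : Z.Countable := countable_iUnion fun n => countable_iUnion fun hn =>
    ((ediam_eq_zero_iff.1 hn).image f).countable
  have hJ : ∀ i, ENNReal.ofReal (2 ^ J i) ≤ 2 * δ := fun i =>
    (hj i.1).trans (by gcongr; exact ht _)
  have hmult : ∀ x ∈ B \ Z, (m : ℕ∞) ≤ {i | x ∈ dyadicIco (J i) (K i)}.encard := by
    rintro x ⟨hxB, hxZ⟩
    obtain ⟨F, hFfib, hFm, hFsep⟩ := hB x hxB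
    exact hFm.trans (encard_le_encard_dyadicIco_of_isSeparated hδε hEt ht hk hxZ hFfib hFsep)
  have hterm : ∀ n : P, ∑' b : Bool, ENNReal.ofReal (2 ^ J (n, b)) ^ s ≤
      2 * 2 ^ s * ⨆ _ : (t n).Nonempty, ediam (t n) ^ s := fun n => by
    have hne : (t n).Nonempty := nonempty_iff_ne_empty.2 fun h => n.2 (by simp [h])
    rw [tsum_bool, iSup_pos hne, ← two_mul, mul_assoc, ← ENNReal.mul_rpow_of_nonneg _ _ hs.le]
    gcongr
    exact hj n
  calc (m : ℝ≥0∞) * hausdorffApprox s (2 * δ) B ≤ m * hausdorffApprox s (2 * δ) (B \ Z) := by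
        gcongr; exact hausdorffApprox_le_diff hs hZ _ _
    _ ≤ ∑' i, ENNReal.ofReal (2 ^ J i) ^ s :=
        natCast_mul_hausdorffApprox_le_tsum_dyadicIco J K (by finiteness) hJ hmult
    _ ≤ ∑' n : P, 2 * 2 ^ s * ⨆ _ : (t n).Nonempty, ediam (t n) ^ s := by
        rw [ENNReal.tsum_prod']; exact ENNReal.tsum_le_tsum hterm
    _ ≤ 2 * 2 ^ s * ∑' n, ⨆ _ : (t n).Nonempty, ediam (t n) ^ s := by
        rw [ENNReal.tsum_mul_left]
        gcongr
        exact ENNReal.tsum_comp_le_tsum_of_injective Subtype.val_injective _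

theorem natCast_mul_hausdorffApprox_le_of_isSeparated (hs : 0 < s) (hf : LipschitzWith 1 f)
    (hδ : δ ≠ ⊤) (hδε : δ ≤ ε)
    (hB : ∀ x ∈ B, ∃ F ⊆ {y ∈ E | f y = x}, (m : ℕ∞) ≤ F.encard ∧ IsSeparated ε F) :
    m * hausdorffApprox s (2 * δ) B ≤ 2 * 2 ^ s * hausdorffApprox s δ E := by
  conv_rhs => rw [hausdorffApprox]
  simp only [ENNReal.mul_iInf_of_ne (by positivity : (2 * 2 ^ s : ℝ≥0∞) ≠ 0)
    (by finiteness : (2 * 2 ^ s : ℝ≥0∞) ≠ ⊤)]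
  exact le_iInf₂ fun t hEt => le_iInf fun ht =>
    natCast_mul_hausdorffApprox_le_tsum_of_isSeparated hs hf hδ hδε hB t hEt ht

theorem natCast_mul_hausdorffMeasure_le_of_isSeparated [MeasurableSpace X] [BorelSpace X]
    (hs : 0 < s) (hf : LipschitzWith 1 f) (hε : 0 < ε)
    (hB : ∀ x ∈ B, ∃ F ⊆ {y ∈ E | f y = x}, (m : ℕ∞) ≤ F.encard ∧ IsSeparated ε F) :
    m * μH[s] B ≤ 2 * 2 ^ s * μH[s] E := by
  rw [hausdorffMeasure_eq_iSup_hausdorffApprox, ENNReal.mul_iSup]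
  refine iSup_le fun r => ?_
  rw [ENNReal.mul_iSup]
  refine iSup_le fun hr => ?_
  obtain ⟨δ, hδ₀, hδ⟩ := exists_between (lt_min hε (ENNReal.half_pos hr.ne'))
  have hδr : 2 * δ ≤ r := by
    rw [mul_comm, ← ENNReal.le_div_iff_mul_le (Or.inl two_ne_zero) (Or.inl ENNReal.ofNat_ne_top)]
    exact (hδ.trans_le (min_le_right _ _)).le
  calc (m : ℝ≥0∞) * hausdorffApprox s r B ≤ m * hausdorffApprox s (2 * δ) B := by
        gcongr; exact hausdorffApprox_anti hδr B
    _ ≤ 2 * 2 ^ s * hausdorffApprox s δ E :=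
        natCast_mul_hausdorffApprox_le_of_isSeparated hs hf hδ.ne_top
          (hδ.trans_le (min_le_left _ _)).le hB
    _ ≤ 2 * 2 ^ s * μH[s] E := by gcongr; exact hausdorffApprox_le_hausdorffMeasure hδ₀ E

lemma Set.Finite.eventually_isSeparated_inv_natCast {F : Set X} (hF : F.Finite) :
    ∀ᶠ n : ℕ in atTop, IsSeparated (n : ℝ≥0∞)⁻¹ F := by
  have := (eventually_all_finite hF.offDiag).2 fun p (hp : p ∈ F.offDiag) =>
    ENNReal.tendsto_inv_nat_nhds_zero.eventually (gt_mem_nhds (edist_pos.2 hp.2.2))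
  filter_upwards [this] with n hn x hx y hy hxy using hn (x, y) ⟨hx, hy, hxy⟩

theorem natCast_mul_hausdorffMeasure_le_of_le_encard [MeasurableSpace X] [BorelSpace X]
    (hs : 0 < s) (hf : LipschitzWith 1 f) {A : Set ℝ}
    (hA : ∀ x ∈ A, (m : ℕ∞) ≤ {y ∈ E | f y = x}.encard) :
    m * μH[s] A ≤ 2 * 2 ^ s * μH[s] E := by
  set A' : ℕ → Set ℝ := fun n => {x ∈ A | ∃ F ⊆ {y ∈ E | f y = x},
    (m : ℕ∞) ≤ F.encard ∧ IsSeparated (n : ℝ≥0∞)⁻¹ F}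
  have hmono : Monotone A' := fun n n' h x ⟨hx, F, hF, hFm, hFsep⟩ =>
    ⟨hx, F, hF, hFm, hFsep.anti (ENNReal.inv_le_inv.2 (by exact_mod_cast h))⟩
  have hcover : A ⊆ ⋃ n, A' n := fun x hx => by
    obtain ⟨F, hF, hFm⟩ := exists_subset_encard_eq (hA x hx)
    obtain ⟨n, hn⟩ := (finite_of_encard_eq_coe hFm).eventually_isSeparated_inv_natCast.exists
    exact mem_iUnion.2 ⟨n, hx, F, hF, hFm.ge, hn⟩
  calc (m : ℝ≥0∞) * μH[s] A ≤ m * μH[s] (⋃ n, A' n) := by gcongr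
    _ = ⨆ n, m * μH[s] (A' n) := by rw [hmono.measure_iUnion, ENNReal.mul_iSup]
    _ ≤ 2 * 2 ^ s * μH[s] E := iSup_le fun n =>
        natCast_mul_hausdorffMeasure_le_of_isSeparated hs hf
          (ENNReal.inv_pos.2 (ENNReal.natCast_ne_top n)) fun x hx => hx.2

end Slicing

lemma natCeil_le_encard_of_ofReal_lt_hausdorffMeasure_zero {X : Type*} [EMetricSpace X]
    [MeasurableSpace X] [BorelSpace X] {S : Set X} {c : ℝ} (h : ENNReal.ofReal c < μH[0] S) :
    (⌈c⌉₊ : ℕ∞) ≤ S.encard := by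
  rcases S.finite_or_infinite with hS | hS
  · have hle : μH[0] S ≤ S.ncard := calc
      μH[0] S = μH[0] (⋃ x ∈ hS.toFinset, {x}) := by simp
      _ ≤ ∑ x ∈ hS.toFinset, μH[0] {x} := measure_biUnion_finset_le _ _
      _ = S.ncard := by simp [ncard_eq_toFinset_card S hS]
    rw [← ENNReal.ofReal_natCast] at hle
    rw [← hS.cast_ncard_eq, Nat.cast_le, Nat.ceil_le]
    exact ((ENNReal.ofReal_lt_ofReal_iff'.1 (h.trans_le hle)).1).le
  · simp [hS.encard_eq]

/-- (Falconer's slicing lower bound) For `d ≥ 1`, `s > 0` there is `b > 0`,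
depending only on `s` and `d`, such that if each slice `{y ∈ E : y₁ = t}`, `t ∈ A`, has
`H^0` measure (cardinality) greater than `c`, then `H^s(E) ≥ b c H^s(A)`. -/
theorem stmt_7 (d : ℕ) (hd : 1 ≤ d) (s : ℝ) (hs : 0 < s) :
    ∃ b : ℝ, 0 < b ∧
      ∀ (E : Set (EuclideanSpace ℝ (Fin d))) (c : ℝ) (A : Set ℝ), 0 < c →
        (∀ t ∈ A, ENNReal.ofReal c < μH[0] {y ∈ E | y ⟨0, hd⟩ = t}) →
        ENNReal.ofReal (b * c) * μH[s] A ≤ μH[s] E := by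
  refine ⟨(2 * 2 ^ s)⁻¹, by positivity, fun E c A _ hslice => ?_⟩
  have hproj : LipschitzWith 1 fun y : EuclideanSpace ℝ (Fin d) => y ⟨0, hd⟩ := by
    rw [← one_mul (1 : ℝ≥0)]
    exact (LipschitzWith.eval _).comp (PiLp.lipschitzWith_ofLp 2 _)
  have hbound := natCast_mul_hausdorffMeasure_le_of_le_encard hs hproj
    fun t ht => natCeil_le_encard_of_ofReal_lt_hausdorffMeasure_zero (hslice t ht)
  have hb : ENNReal.ofReal ((2 * 2 ^ s)⁻¹ * c) ≤ (2 * 2 ^ s)⁻¹ * ⌈c⌉₊ := by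
    rw [ENNReal.ofReal_mul (by positivity), ENNReal.ofReal_inv_of_pos (by positivity),
      ENNReal.ofReal_mul zero_le_two, ← ENNReal.ofReal_rpow_of_pos two_pos, ENNReal.ofReal_ofNat]
    gcongr
    exact (ENNReal.ofReal_le_ofReal (Nat.le_ceil c)).trans_eq (ENNReal.ofReal_natCast _)
  calc ENNReal.ofReal ((2 * 2 ^ s)⁻¹ * c) * μH[s] A ≤ (2 * 2 ^ s)⁻¹ * (⌈c⌉₊ * μH[s] A) := by
        rw [← mul_assoc]; gcongr
    _ ≤ (2 * 2 ^ s)⁻¹ * (2 * 2 ^ s * μH[s] E) := by gcongr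
    _ = μH[s] E :=
        ENNReal.inv_mul_cancel_left (by positivity : (2 * 2 ^ s : ℝ≥0∞) ≠ 0) (by finiteness)
end
end

section
/- Let h : [0,1]^n → ℝ^{n+1} be a continuous map that is differentiable at no point of [0,1]^n. Then there exists a unit vector v ∈ ℝ^{n+1} such that the function x ↦ ⟨v, h(x)⟩ is non-differentiable at Lebesgue-almost every x ∈ [0,1]^n. -/
/-! For an interior point `x` of the cube, the vectors `v` for which `⟪v, h ·⟫` is differentiable
at `x` form a linear subspace of `ℝ^{n+1}`; it is proper because `h` itself is not differentiable
at `x`, so it is Lebesgue-null. Once `h` is extended continuously to all of `ℝ^n`, the pairs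
`(v, x)` with `⟪v, h ·⟫` differentiable at `x` form a Borel set, and Fubini shows that for almost
every `v` its slice is null. The boundary of the convex cube is null as well, and normalizing `v`
gives a unit vector. -/

open MeasureTheory Metric Set Filter
open scoped ENNReal NNReal Topology RealInnerProductSpace

noncomputable section

universe u v

theorem IsClosed.exists_continuous_eqOn {X : Type u} {Y : Type v} [TopologicalSpace X]
    [NormalSpace X] [TopologicalSpace Y] [TietzeExtension.{u, v} Y] {s : Set X}
    (hs : IsClosed s) {f : X → Y} (hf : ContinuousOn f s) :
    ∃ g : X → Y, Continuous g ∧ EqOn g f s := by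
  obtain ⟨g, hg⟩ := ContinuousMap.exists_restrict_eq hs ⟨s.domRestrict f, hf.domRestrict⟩
  exact ⟨g, g.continuous, fun x hx => ContinuousMap.congr_fun hg ⟨x, hx⟩⟩

theorem unitCube_eq_preimage_pi (n : ℕ) :
    unitCube n = WithLp.ofLp ⁻¹' Set.univ.pi fun _ => Icc (0 : ℝ) 1 := by
  ext x
  simp only [unitCube, mem_preimage, mem_univ_pi]
  rfl

theorem isClosed_unitCube (n : ℕ) : IsClosed (unitCube n) := by
  rw [unitCube_eq_preimage_pi]
  exact (isClosed_set_pi fun _ _ => isClosed_Icc).preimage (PiLp.continuous_ofLp 2 _)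

theorem convex_unitCube (n : ℕ) : Convex ℝ (unitCube n) := by
  rw [unitCube_eq_preimage_pi]
  exact (convex_pi fun _ _ => convex_Icc 0 1).linear_preimage
    (WithLp.linearEquiv 2 ℝ _).toLinearMap

section InnerDifferentiable

variable {E F : Type*} [NormedAddCommGroup E] [NormedSpace ℝ E]
  [NormedAddCommGroup F] [InnerProductSpace ℝ F]

def innerDifferentiableSubmodule (f : E → F) (x : E) : Submodule ℝ F where
  carrier := {v | DifferentiableAt ℝ (fun y => ⟪v, f y⟫) x}
  add_mem' {a b} ha hb := by
    simp only [mem_ofPred_eq, inner_add_left] at ha hb ⊢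
    exact ha.add hb
  zero_mem' := by simp
  smul_mem' c v hv := by
    simpa only [mem_ofPred_eq, real_inner_smul_left] using hv.const_mul c

theorem differentiableAt_of_innerDifferentiableSubmodule_eq_top [FiniteDimensional ℝ F]
    {f : E → F} {x : E} (htop : innerDifferentiableSubmodule f x = ⊤) :
    DifferentiableAt ℝ f x := by
  let b := stdOrthonormalBasis ℝ F
  have hf : f = fun y => ∑ i, ⟪b i, f y⟫ • b i := funext fun y => (b.sum_repr' (f y)).symm
  rw [hf]
  refine DifferentiableAt.fun_sum fun i _ => DifferentiableAt.smul_const ?_ (b i)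
  exact (htop ▸ Submodule.mem_top : b i ∈ innerDifferentiableSubmodule f x)

variable [FiniteDimensional ℝ E] [MeasurableSpace E] [BorelSpace E]
  [MeasurableSpace F] [BorelSpace F]

theorem measurableSet_innerDifferentiableAt {f : E → F} (hf : Continuous f) :
    MeasurableSet {p : F × E | DifferentiableAt ℝ (fun y => ⟪p.1, f y⟫) p.2} :=
  measurableSet_of_differentiableAt_with_param ℝ (f := fun v y => ⟪v, f y⟫)
    (continuous_fst.inner (hf.comp continuous_snd))

theorem ae_measure_innerDifferentiableAt_eq_zero [FiniteDimensional ℝ F] (μ : Measure E)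
    [SFinite μ] (ν : Measure F) [ν.IsAddHaarMeasure] {f : E → F} (hf : Continuous f)
    {U : Set E} (hU : ∀ x ∈ U, ¬ DifferentiableAt ℝ f x) :
    ∀ᵐ v ∂ν, μ {x ∈ U | DifferentiableAt ℝ (fun y => ⟪v, f y⟫) x} = 0 := by
  set D := {p : F × E | DifferentiableAt ℝ (fun y => ⟪p.1, f y⟫) p.2}
  have hD : MeasurableSet D := measurableSet_innerDifferentiableAt hf
  have hslice : ∀ x ∈ U, ν ((fun v => (v, x)) ⁻¹' D) = 0 := fun x hx =>
    Measure.addHaar_submodule ν (innerDifferentiableSubmodule f x)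
      fun htop => hU x hx (differentiableAt_of_innerDifferentiableSubmodule_eq_top htop)
  have hnull : (ν.prod (μ.restrict U)) D = 0 := by
    rw [Measure.prod_apply_symm hD, lintegral_eq_zero_iff (measurable_measure_prodMk_right hD)]
    exact (ae_restrict_iff (measurable_measure_prodMk_right hD (measurableSet_singleton 0))).2
      (ae_of_all _ hslice)
  filter_upwards [(Measure.measure_prod_null hD).1 hnull] with v hv
  rwa [Measure.restrict_apply (measurable_prodMk_left hD), inter_comm] at hv

end InnerDifferentiable

/-- If `h : [0,1]^n → ℝ^{n+1}` is continuous and differentiable at no point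
of `[0,1]^n`, then there is a unit vector `v ∈ ℝ^{n+1}` such that `x ↦ ⟪v, h x⟫` is
non-differentiable at Lebesgue-almost every point of `[0,1]^n`. -/
theorem stmt_14 (n : ℕ)
    (h : EuclideanSpace ℝ (Fin n) → EuclideanSpace ℝ (Fin (n + 1)))
    (hc : ContinuousOn h (unitCube n))
    (hnd : ∀ x ∈ unitCube n, ¬ DifferentiableWithinAt ℝ h (unitCube n) x) :
    ∃ v : EuclideanSpace ℝ (Fin (n + 1)), ‖v‖ = 1 ∧
      volume {x ∈ unitCube n |
        DifferentiableWithinAt ℝ (fun y => ⟪v, h y⟫) (unitCube n) x} = 0 := by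
  obtain ⟨H, hH, hHh⟩ := (isClosed_unitCube n).exists_continuous_eqOn hc
  have hH_eq : ∀ x ∈ interior (unitCube n), h =ᶠ[𝓝 x] H := fun x hx =>
    eventually_of_mem (mem_interior_iff_mem_nhds.1 hx) fun y hy => (hHh hy).symm
  have hH_nd : ∀ x ∈ interior (unitCube n), ¬ DifferentiableAt ℝ H x := fun x hx hdiff =>
    hnd x (interior_subset hx) ((hH_eq x hx).differentiableAt_iff.2 hdiff).differentiableWithinAt
  obtain ⟨v, hv, hv0⟩ := ((ae_measure_innerDifferentiableAt_eq_zero volume volume hH hH_nd).and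
    (Measure.ae_ne volume 0)).exists
  refine ⟨‖v‖⁻¹ • v, norm_smul_inv_norm hv0, measure_mono_null ?_
    (measure_union_null ((convex_unitCube n).addHaar_frontier volume) hv)⟩
  rintro x ⟨hxs, hdiff⟩
  by_cases hxi : x ∈ interior (unitCube n)
  · have hdiff' := (hdiff.differentiableAt (mem_interior_iff_mem_nhds.1 hxi)).const_mul ‖v‖
    simp only [real_inner_smul_left, ← mul_assoc, mul_inv_cancel₀ (norm_ne_zero_iff.2 hv0),
      one_mul] at hdiff'
    exact Or.inr ⟨hxi, ((hH_eq x hxi).fun_comp (inner ℝ v)).differentiableAt_iff.1 hdiff'⟩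
  · exact Or.inl ⟨subset_closure hxs, hxi⟩

end
end

section
/- Let C ⊂ ℝ^n be a closed set and let θ ∈ ℝ^n be a unit vector. Then the set X_θ := {x ∈ C : x is an isolated point of C ∩ F^θ_x} is a Borel set; indeed C \ X_θ is an F_{σδ} set. -/
open MeasureTheory Metric Set Filter
open scoped ENNReal NNReal Topology RealInnerProductSpace

noncomputable section

lemma aux_closed {n : ℕ} (C : Set (EuclideanSpace ℝ (Fin n))) (hC : IsClosed C)
    (θ : EuclideanSpace ℝ (Fin n)) (a b : ℝ) :
    IsClosed {x | x ∈ C ∧ ∃ y ∈ C, ⟪y - x, θ⟫ = 0 ∧ a ≤ dist x y ∧ dist x y ≤ b} := by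
  rw [← isSeqClosed_iff_isClosed]
  intro x p hmem hx
  choose y hyC hyI hya hyb using fun k => (hmem k).2
  obtain ⟨N, hN⟩ := (Metric.tendsto_atTop.mp hx 1 one_pos)
  have hball : ∀ k, y (N + k) ∈ C ∩ closedBall p (b + 1) := by
    intro k
    refine ⟨hyC _, ?_⟩
    have h1 : dist (x (N + k)) p ≤ 1 := le_of_lt (hN (N + k) (Nat.le_add_right _ _))
    simp only [Metric.mem_closedBall]
    calc dist (y (N + k)) p ≤ dist (y (N+k)) (x (N+k)) + dist (x (N+k)) p := dist_triangle _ _ _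
    _ ≤ b + 1 := add_le_add (by simpa [dist_comm] using hyb (N + k)) h1
  have hcomp : IsCompact (C ∩ closedBall p (b + 1)) :=
    (isCompact_closedBall p (b + 1)).inter_left hC
  obtain ⟨q, hq, φ, hφ, hφt⟩ := hcomp.tendsto_subseq hball
  have hxφ : Tendsto (fun k => x (N + φ k)) atTop (𝓝 p) :=
    hx.comp (tendsto_atTop_mono (fun k => Nat.le_add_left _ _) hφ.tendsto_atTop)
  have hdist : Tendsto (fun k => dist (x (N + φ k)) (y (N + φ k))) atTop (𝓝 (dist p q)) :=
    hxφ.dist hφt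
  refine ⟨hC.mem_of_tendsto hx (Eventually.of_forall fun k => (hmem k).1), q, hq.1, ?_, ?_, ?_⟩
  · have hin : Tendsto (fun k => ⟪y (N + φ k) - x (N + φ k), θ⟫) atTop (𝓝 ⟪q - p, θ⟫) :=
      (hφt.sub hxφ).inner tendsto_const_nhds
    have : Tendsto (fun _ : ℕ => (0:ℝ)) atTop (𝓝 ⟪q - p, θ⟫) := by
      simpa [fun k => hyI (N + φ k)] using hin
    exact tendsto_nhds_unique this tendsto_const_nhds
  · exact ge_of_tendsto hdist (Eventually.of_forall fun k => hya _)
  · exact le_of_tendsto hdist (Eventually.of_forall fun k => hyb _)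

/-- For a closed set `C ⊆ ℝ^n` and a unit vector `θ`, the set
`X_θ = {x ∈ C : x is isolated in C ∩ F^θ_x}` is Borel; indeed `C \ X_θ` is an
`F_{σδ}` set. -/
theorem stmt_15 (n : ℕ) (C : Set (EuclideanSpace ℝ (Fin n))) (hC : IsClosed C)
    (θ : EuclideanSpace ℝ (Fin n)) (hθ : ‖θ‖ = 1) :
    MeasurableSet {x ∈ C | IsIsolatedIn x (C ∩ hyperplaneThrough θ x)} ∧
    ∃ F : ℕ → ℕ → Set (EuclideanSpace ℝ (Fin n)),
      (∀ i j, IsClosed (F i j)) ∧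
      C \ {x ∈ C | IsIsolatedIn x (C ∩ hyperplaneThrough θ x)} = ⋂ i, ⋃ j, F i j := by
  set X := {x ∈ C | IsIsolatedIn x (C ∩ hyperplaneThrough θ x)} with hX
  set F : ℕ → ℕ → Set (EuclideanSpace ℝ (Fin n)) := fun i j =>
    {x | x ∈ C ∧ ∃ y ∈ C, ⟪y - x, θ⟫ = 0 ∧
      1/((j:ℝ)+1) ≤ dist x y ∧ dist x y ≤ 1/((i:ℝ)+1)} with hF
  have hFcl : ∀ i j, IsClosed (F i j) := fun i j => aux_closed C hC θ _ _
  have key : C \ X = ⋂ i, ⋃ j, F i j := by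
    ext x
    simp only [mem_diff, mem_iInter, mem_iUnion, hX, hF, mem_setOf_eq, mem_sep_iff]
    constructor
    · rintro ⟨hxC, hnot⟩ i
      have hni : ¬ IsIsolatedIn x (C ∩ hyperplaneThrough θ x) := fun h => hnot ⟨hxC, h⟩
      have hxA : x ∈ C ∩ hyperplaneThrough θ x := ⟨hxC, by simp [hyperplaneThrough]⟩
      rw [IsIsolatedIn] at hni
      push_neg at hni
      have hne := hni hxA (1/((i:ℝ)+1)) (by positivity)
      have hex : ∃ y ∈ (C ∩ hyperplaneThrough θ x) ∩ ball x (1/((i:ℝ)+1)), y ≠ x := by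
        by_contra h
        push_neg at h
        exact hne (Subset.antisymm (fun y hy => h y hy)
          (singleton_subset_iff.2 ⟨hxA, mem_ball_self (by positivity)⟩))
      obtain ⟨y, ⟨⟨hyC, hyH⟩, hyball⟩, hyne⟩ := hex
      have hd : 0 < dist x y := dist_pos.2 hyne.symm
      obtain ⟨j, hj⟩ := exists_nat_one_div_lt hd
      exact ⟨j, hxC, y, hyC, hyH, hj.le, le_of_lt (by simpa [dist_comm] using hyball)⟩
    · intro h
      obtain ⟨j0, hx0⟩ := h 0
      refine ⟨hx0.1, ?_⟩
      rintro ⟨-, hxA, r, hr, hball⟩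
      obtain ⟨i, hi⟩ := exists_nat_one_div_lt hr
      obtain ⟨j, hxC', y, hyC, hyH, h1, h2⟩ := h i
      have hyx : y ∈ (C ∩ hyperplaneThrough θ x) ∩ ball x r :=
        ⟨⟨hyC, hyH⟩, by rw [mem_ball, dist_comm]; exact lt_of_le_of_lt h2 hi⟩
      rw [hball] at hyx
      have hd0 : dist x y = 0 := by simp [mem_singleton_iff.1 hyx]
      have hpos : (0:ℝ) < 1/((j:ℝ)+1) := by positivity
      linarith
  have hM : MeasurableSet (C \ X) := by
    rw [key]
    exact MeasurableSet.iInter fun i => MeasurableSet.iUnion fun j => (hFcl i j).measurableSet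
  have hXeq : X = C \ (C \ X) := (diff_diff_cancel_left (sep_subset _ _)).symm
  exact ⟨hXeq ▸ hC.measurableSet.diff hM, F, hFcl, key⟩

end
end

section
/- For every n ≥ 1 there exist a constant c > 0 and a continuous injective map h : [0,1]^n → ℝ^{n+1} such that c·‖x − y‖ ≤ ‖h(x) − h(y)‖ for all x, y ∈ [0,1]^n, and h is differentiable at no point of [0,1]^n. -/
open MeasureTheory Metric Set Filter
open scoped ENNReal NNReal Topology RealInnerProductSpace

noncomputable section

/-! Take `h x = (x, T (x 0))`, where `T x = ∑ₖ 2⁻ᵏ d(2ᵏ x)` is the Takagi function and `d` the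
distance to the nearest integer. The first `n` coordinates of `h x` are `x`, so `h` expands
distances (with `c = 1`); and a derivative of `h` would yield a derivative of `T` within `[0,1]`.
But on a dyadic interval of level `m`, the terms of `T` with `k < m` are affine and those with
`k > m` vanish at both endpoints and at the midpoint, so `T` at the midpoint exceeds the mean of
its endpoint values by exactly half the length of the interval. Hence along the nested dyadic
intervals containing a point the slopes of `T` change by `±1` at every halving, and cannot converge
to a derivative. -/

def distToInt (x : ℝ) : ℝ := |x - round x|

lemma distToInt_nonneg (x : ℝ) : 0 ≤ distToInt x := abs_nonneg _

lemma distToInt_le_half (x : ℝ) : distToInt x ≤ 1 / 2 := abs_sub_round x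

@[simp]
lemma distToInt_intCast (z : ℤ) : distToInt z = 0 := by simp [distToInt]

lemma distToInt_le_abs_sub (x : ℝ) (z : ℤ) : distToInt x ≤ |x - z| := round_le x z

lemma distToInt_eq_abs_sub {x : ℝ} {t : ℤ} (h : |x - t| ≤ 1 / 2) : distToInt x = |x - t| := by
  refine (distToInt_le_abs_sub x t).antisymm ?_
  rcases eq_or_ne (round x) t with hr | hr
  · simp [distToInt, hr]
  · have hsep : (1 : ℝ) ≤ |(round x : ℝ) - t| := by
      rw [← Int.cast_sub, ← Int.cast_abs]
      exact_mod_cast Int.one_le_abs (sub_ne_zero.mpr hr)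
    have := abs_sub_le (round x : ℝ) x t
    rw [abs_sub_comm (round x : ℝ) x] at this
    unfold distToInt
    linarith

lemma lipschitzWith_distToInt : LipschitzWith 1 distToInt := by
  refine LipschitzWith.of_le_add fun x y => ?_
  calc distToInt x ≤ |x - round y| := distToInt_le_abs_sub x _
    _ ≤ |x - y| + distToInt y := abs_sub_le x y _
    _ = distToInt y + dist x y := by rw [Real.dist_eq, add_comm]

lemma distToInt_midpoint {a b : ℝ} (l : ℤ) (ha : a ∈ Icc (l / 2 : ℝ) ((l + 1) / 2))
    (hb : b ∈ Icc (l / 2 : ℝ) ((l + 1) / 2)) :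
    distToInt ((a + b) / 2) = (distToInt a + distToInt b) / 2 := by
  obtain ⟨ha₀, ha₁⟩ := ha
  obtain ⟨hb₀, hb₁⟩ := hb
  rcases Int.even_or_odd' l with ⟨t, rfl | rfl⟩
  · have key : ∀ y : ℝ, (t : ℝ) ≤ y → y ≤ t + 1 / 2 → distToInt y = y - t := fun y h₀ h₁ => by
      rw [distToInt_eq_abs_sub (t := t) (by rw [abs_le]; constructor <;> linarith),
        abs_of_nonneg (by linarith)]
    push_cast at *
    rw [key a (by linarith) (by linarith), key b (by linarith) (by linarith),
      key _ (by linarith) (by linarith)]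
    ring
  · have key : ∀ y : ℝ, (t : ℝ) + 1 / 2 ≤ y → y ≤ t + 1 → distToInt y = t + 1 - y :=
      fun y h₀ h₁ => by
        rw [distToInt_eq_abs_sub (t := t + 1) (by push_cast; rw [abs_le]; constructor <;> linarith),
          abs_of_nonpos (by push_cast; linarith)]
        push_cast; ring
    push_cast at *
    rw [key a (by linarith) (by linarith), key b (by linarith) (by linarith),
      key _ (by linarith) (by linarith)]
    ring

lemma distToInt_dyadic_midpoint (p : ℕ) (j : ℤ) :
    distToInt ((2 * j + 1) / 2 ^ (p + 2)) =
      (distToInt (j / 2 ^ (p + 1)) + distToInt ((j + 1) / 2 ^ (p + 1))) / 2 := by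
  -- a dyadic interval of level `p + 1` lies in a half-unit interval `[l/2, (l+1)/2]`,
  -- on which `distToInt` is affine
  have hq : (0 : ℤ) < 2 ^ p := by positivity
  have hlow : ((j / 2 ^ p : ℤ) : ℝ) * 2 ^ p ≤ j := by exact_mod_cast Int.ediv_mul_le j hq.ne'
  have hupp : (j : ℝ) + 1 ≤ ((j / 2 ^ p : ℤ) + 1) * 2 ^ p := by
    exact_mod_cast Int.lt_ediv_add_one_mul_self j hq
  have hmid : ((2 * j + 1) / 2 ^ (p + 2) : ℝ) = (j / 2 ^ (p + 1) + (j + 1) / 2 ^ (p + 1)) / 2 := by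
    field_simp; ring
  rw [hmid]
  apply distToInt_midpoint (j / 2 ^ p) <;> constructor <;>
    rw [pow_succ, div_le_div_iff₀ (by positivity) (by positivity)] <;> nlinarith

def takagi (x : ℝ) : ℝ := ∑' k : ℕ, distToInt (2 ^ k * x) / 2 ^ k

lemma norm_distToInt_pow_mul_div_le (k : ℕ) (x : ℝ) :
    ‖distToInt (2 ^ k * x) / 2 ^ k‖ ≤ (1 / 2) ^ k := by
  rw [Real.norm_of_nonneg (div_nonneg (distToInt_nonneg _) (by positivity)), one_div_pow]
  gcongr
  linarith [distToInt_le_half (2 ^ k * x)]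

lemma summable_takagi (x : ℝ) : Summable fun k : ℕ => distToInt (2 ^ k * x) / 2 ^ k :=
  .of_norm_bounded summable_geometric_two fun k => norm_distToInt_pow_mul_div_le k x

lemma continuous_takagi : Continuous takagi :=
  continuous_tsum
    (fun _ => (lipschitzWith_distToInt.continuous.comp (continuous_const_mul _)).div_const _)
    summable_geometric_two norm_distToInt_pow_mul_div_le

lemma distToInt_pow_mul_dyadic_midpoint_sub_mean (k m : ℕ) (j : ℤ) :
    distToInt (2 ^ k * ((2 * j + 1) / 2 ^ (m + 1))) / 2 ^ k -
        (distToInt (2 ^ k * (j / 2 ^ m)) / 2 ^ k +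
          distToInt (2 ^ k * ((j + 1) / 2 ^ m)) / 2 ^ k) / 2 =
      if k = m then 1 / 2 ^ (m + 1) else 0 := by
  rcases lt_trichotomy k m with hk | rfl | hk
  · obtain ⟨p, rfl⟩ := Nat.exists_eq_add_of_lt hk
    have e₁ : (2 : ℝ) ^ k * (j / 2 ^ (k + p + 1)) = j / 2 ^ (p + 1) := by
      rw [pow_add, pow_add]; field_simp; ring
    have e₂ : (2 : ℝ) ^ k * ((j + 1) / 2 ^ (k + p + 1)) = (j + 1) / 2 ^ (p + 1) := by
      rw [pow_add, pow_add]; field_simp; ring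
    have e₃ : (2 : ℝ) ^ k * ((2 * j + 1) / 2 ^ (k + p + 1 + 1)) = (2 * j + 1) / 2 ^ (p + 2) := by
      rw [pow_add, pow_add, pow_add]; field_simp; ring
    rw [if_neg hk.ne, e₁, e₂, e₃, distToInt_dyadic_midpoint]
    ring
  · have e₁ : (2 : ℝ) ^ k * (j / 2 ^ k) = (j : ℤ) := by field_simp
    have e₂ : (2 : ℝ) ^ k * ((j + 1) / 2 ^ k) = (j + 1 : ℤ) := by push_cast; field_simp
    have e₃ : (2 : ℝ) ^ k * ((2 * j + 1) / 2 ^ (k + 1)) = j + 1 / 2 := by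
      rw [pow_succ]; field_simp
    have half : distToInt (j + 1 / 2) = 1 / 2 := by
      rw [distToInt_eq_abs_sub (t := j)] <;> norm_num
    rw [if_pos rfl, e₁, e₂, e₃, half, distToInt_intCast, distToInt_intCast, pow_succ]
    ring
  · obtain ⟨d, rfl⟩ := Nat.exists_eq_add_of_lt hk
    have e₁ : (2 : ℝ) ^ (m + d + 1) * (j / 2 ^ m) = (j * 2 ^ (d + 1) : ℤ) := by
      push_cast; rw [pow_add, pow_add]; field_simp; ring
    have e₂ : (2 : ℝ) ^ (m + d + 1) * ((j + 1) / 2 ^ m) = ((j + 1) * 2 ^ (d + 1) : ℤ) := by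
      push_cast; rw [pow_add, pow_add]; field_simp; ring
    have e₃ : (2 : ℝ) ^ (m + d + 1) * ((2 * j + 1) / 2 ^ (m + 1)) = ((2 * j + 1) * 2 ^ d : ℤ) := by
      push_cast; rw [pow_add, pow_add, pow_add]; field_simp
    rw [if_neg (by omega), e₁, e₂, e₃, distToInt_intCast, distToInt_intCast, distToInt_intCast]
    ring

lemma takagi_dyadic_midpoint (m : ℕ) (j : ℤ) :
    takagi ((2 * j + 1) / 2 ^ (m + 1)) =
      (takagi (j / 2 ^ m) + takagi ((j + 1) / 2 ^ m)) / 2 + 1 / 2 ^ (m + 1) := by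
  have hu := summable_takagi (j / 2 ^ m)
  have hv := summable_takagi ((j + 1) / 2 ^ m)
  have hw := summable_takagi ((2 * j + 1) / 2 ^ (m + 1))
  have key : takagi ((2 * j + 1) / 2 ^ (m + 1)) -
      (takagi (j / 2 ^ m) + takagi ((j + 1) / 2 ^ m)) / 2 = 1 / 2 ^ (m + 1) := by
    unfold takagi
    rw [← hu.tsum_add hv, ← tsum_div_const, ← hw.tsum_sub ((hu.add hv).div_const 2)]
    simp_rw [distToInt_pow_mul_dyadic_midpoint_sub_mean]
    exact tsum_ite_eq m _
  linarith

lemma abs_sub_slope_takagi_dyadic_half (m : ℕ) {j j' : ℤ} (hj : j' = 2 * j ∨ j' = 2 * j + 1) :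
    |slope takagi (j' / 2 ^ (m + 1)) ((j' + 1) / 2 ^ (m + 1)) -
      slope takagi (j / 2 ^ m) ((j + 1) / 2 ^ m)| = 1 := by
  have hmid := takagi_dyadic_midpoint m j
  have hpow : (2 : ℝ) ^ (m + 1) = 2 * 2 ^ m := pow_succ' 2 m
  have e₀ : (2 * j : ℝ) / 2 ^ (m + 1) = j / 2 ^ m := by rw [hpow]; field_simp
  have e₁ : (2 * j + 1 + 1 : ℝ) / 2 ^ (m + 1) = (j + 1) / 2 ^ m := by rw [hpow]; field_simp; ring
  have d₁ : (2 * j + 1 : ℝ) / 2 ^ (m + 1) - j / 2 ^ m = 1 / 2 ^ (m + 1) := by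
    rw [hpow]; field_simp; ring
  have d₂ : ((j + 1 : ℝ) / 2 ^ m - (2 * j + 1) / 2 ^ (m + 1)) = 1 / 2 ^ (m + 1) := by
    rw [hpow]; field_simp; ring
  have d : ((j + 1 : ℝ) / 2 ^ m - j / 2 ^ m) = 1 / 2 ^ m := by field_simp; ring
  rcases hj with rfl | rfl <;> push_cast <;> simp only [slope_def_field, e₀, e₁, d₁, d₂, d, hmid]
  · rw [← abs_one (α := ℝ)]
    congr 1
    rw [hpow]; field_simp; ring
  · rw [← abs_one (α := ℝ), ← abs_neg]
    congr 1
    rw [hpow]; field_simp; ring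

def dyadicIndex (x : ℝ) : ℕ → ℤ
  | 0 => 0
  | m + 1 =>
    if x ≤ (2 * dyadicIndex x m + 1) / 2 ^ (m + 1) then 2 * dyadicIndex x m
    else 2 * dyadicIndex x m + 1

lemma dyadicIndex_succ (x : ℝ) (m : ℕ) :
    dyadicIndex x (m + 1) = 2 * dyadicIndex x m ∨
      dyadicIndex x (m + 1) = 2 * dyadicIndex x m + 1 := by
  rw [dyadicIndex]
  split_ifs <;> simp

lemma dyadicIndex_bounds {x : ℝ} (hx : x ∈ Icc (0 : ℝ) 1) (m : ℕ) :
    0 ≤ (dyadicIndex x m : ℝ) / 2 ^ m ∧ (dyadicIndex x m : ℝ) / 2 ^ m ≤ x ∧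
      x ≤ (dyadicIndex x m + 1) / 2 ^ m ∧ (dyadicIndex x m + 1 : ℝ) / 2 ^ m ≤ 1 := by
  induction m with
  | zero => simpa [dyadicIndex] using hx
  | succ m ih =>
    obtain ⟨h₀, h₁, h₂, h₃⟩ := ih
    have hpow : (2 : ℝ) ^ (m + 1) = 2 * 2 ^ m := pow_succ' 2 m
    have e₀ : (2 * dyadicIndex x m : ℝ) / 2 ^ (m + 1) = dyadicIndex x m / 2 ^ m := by
      rw [hpow]; field_simp
    have e₁ : (2 * dyadicIndex x m + 1 + 1 : ℝ) / 2 ^ (m + 1) = (dyadicIndex x m + 1) / 2 ^ m := by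
      rw [hpow]; field_simp; ring
    have hw : (dyadicIndex x m : ℝ) / 2 ^ m ≤ (2 * dyadicIndex x m + 1) / 2 ^ (m + 1) ∧
        (2 * dyadicIndex x m + 1 : ℝ) / 2 ^ (m + 1) ≤ (dyadicIndex x m + 1) / 2 ^ m := by
      rw [← e₀, ← e₁]
      constructor <;> gcongr <;> linarith
    rw [dyadicIndex]
    split_ifs with h
    · push_cast; rw [e₀]; exact ⟨h₀, h₁, h, hw.2.trans h₃⟩
    · push_cast; rw [e₁]; exact ⟨h₀.trans hw.1, (not_le.mp h).le, h₂, h₃⟩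

theorem HasDerivWithinAt.tendsto_slope_of_le_of_le {E : Type*} [NormedAddCommGroup E]
    [NormedSpace ℝ E] {f : ℝ → E} {f' : E} {s : Set ℝ} {x : ℝ} (hf : HasDerivWithinAt f f' s x)
    {α : Type*} {l : Filter α} {u v : α → ℝ} (hus : ∀ a, u a ∈ s) (hvs : ∀ a, v a ∈ s)
    (hux : ∀ a, u a ≤ x) (hxv : ∀ a, x ≤ v a) (huv : ∀ a, u a < v a)
    (hlen : Tendsto (fun a => v a - u a) l (𝓝 0)) :
    Tendsto (fun a => slope f (u a) (v a)) l (𝓝 f') := by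
  have hlim : ∀ w : α → ℝ, (∀ a, w a ∈ s) → (∀ a, |w a - x| ≤ v a - u a) →
      (fun a => f (w a) - f x - (w a - x) • f') =o[l] fun a => v a - u a := by
    intro w hws hw
    have hwx : Tendsto w l (𝓝[s] x) := by
      refine tendsto_nhdsWithin_iff.mpr ⟨?_, .of_forall hws⟩
      rw [← tendsto_sub_nhds_zero_iff]
      exact squeeze_zero_norm hw hlen
    refine (hf.isLittleO.comp_tendsto hwx).trans_isBigO (.of_bound 1 (.of_forall fun a => ?_))
    simpa [Real.norm_eq_abs, abs_of_pos (sub_pos.mpr (huv a))] using hw a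
  have hdiff := (hlim v hvs fun a => by
      rw [abs_of_nonneg (sub_nonneg.mpr (hxv a))]; linarith [hux a]).sub
    (hlim u hus fun a => by rw [abs_of_nonpos (sub_nonpos.mpr (hux a))]; linarith [hxv a])
  rw [← tendsto_sub_nhds_zero_iff]
  refine hdiff.tendsto_inv_smul_nhds_zero.congr fun a => ?_
  have hne : v a - u a ≠ 0 := (sub_pos.mpr (huv a)).ne'
  have hcancel : f (v a) - f x - (v a - x) • f' - (f (u a) - f x - (u a - x) • f') =
      (f (v a) - f (u a)) - (v a - u a) • f' := by module
  rw [slope_def_module, hcancel, smul_sub, inv_smul_smul₀ hne]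

theorem not_differentiableWithinAt_takagi {x : ℝ} (hx : x ∈ Icc (0 : ℝ) 1) :
    ¬ DifferentiableWithinAt ℝ takagi (Icc 0 1) x := by
  intro hd
  set D : ℕ → ℝ := fun m => slope takagi (dyadicIndex x m / 2 ^ m) ((dyadicIndex x m + 1) / 2 ^ m)
  have hb := dyadicIndex_bounds hx
  have hlen : Tendsto (fun m : ℕ => (dyadicIndex x m + 1 : ℝ) / 2 ^ m - dyadicIndex x m / 2 ^ m)
      atTop (𝓝 0) := by
    convert tendsto_pow_atTop_nhds_zero_of_lt_one (r := (1 / 2 : ℝ)) (by norm_num) (by norm_num)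
      using 1
    ext m; rw [one_div_pow]; field_simp; ring
  have hD : Tendsto D atTop (𝓝 (derivWithin takagi (Icc 0 1) x)) :=
    hd.hasDerivWithinAt.tendsto_slope_of_le_of_le
      (fun m => ⟨(hb m).1, (hb m).2.1.trans hx.2⟩)
      (fun m => ⟨hx.1.trans (hb m).2.2.1, (hb m).2.2.2⟩)
      (fun m => (hb m).2.1) (fun m => (hb m).2.2.1) (fun m => by gcongr; linarith) hlen
  have hstep : Tendsto (fun m => |D (m + 1) - D m|) atTop (𝓝 0) := by
    simpa using ((hD.comp (tendsto_add_atTop_nat 1)).sub hD).abs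
  have hone : (fun m => |D (m + 1) - D m|) = fun _ => 1 :=
    funext fun m => abs_sub_slope_takagi_dyadic_half m (dyadicIndex_succ x m)
  rw [hone] at hstep
  exact one_ne_zero (tendsto_nhds_unique tendsto_const_nhds hstep)

section snocPt

variable {n : ℕ}

@[simp]
lemma snocPt_apply_castSucc (x : EuclideanSpace ℝ (Fin n)) (t : ℝ) (i : Fin n) :
    snocPt x t i.castSucc = x i := by
  simp [snocPt]

@[simp]
lemma snocPt_apply_last (x : EuclideanSpace ℝ (Fin n)) (t : ℝ) : snocPt x t (Fin.last n) = t := by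
  simp [snocPt]

lemma snocPt_sub (x y : EuclideanSpace ℝ (Fin n)) (s t : ℝ) :
    snocPt x s - snocPt y t = snocPt (x - y) (s - t) := by
  ext i
  refine Fin.lastCases ?_ (fun i => ?_) i <;> simp

lemma norm_snocPt_sq (x : EuclideanSpace ℝ (Fin n)) (t : ℝ) :
    ‖snocPt x t‖ ^ 2 = ‖x‖ ^ 2 + t ^ 2 := by
  simp [EuclideanSpace.norm_sq_eq, Fin.sum_univ_castSucc]

lemma norm_le_norm_snocPt (x : EuclideanSpace ℝ (Fin n)) (t : ℝ) : ‖x‖ ≤ ‖snocPt x t‖ :=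
  le_of_sq_le_sq (by rw [norm_snocPt_sq]; nlinarith [sq_nonneg t]) (norm_nonneg _)

lemma Continuous.snocPt {X : Type*} [TopologicalSpace X] {f : X → EuclideanSpace ℝ (Fin n)}
    {g : X → ℝ} (hf : Continuous f) (hg : Continuous g) : Continuous fun a => snocPt (f a) (g a) :=
  (EuclideanSpace.equiv (Fin (n + 1)) ℝ).symm.continuous.comp
    ((continuous_pi fun i => (EuclideanSpace.proj i).continuous.comp hf).finSnoc hg)

end snocPt

lemma DifferentiableWithinAt.of_comp_apply_unitCube {n : ℕ} {F : Type*} [NormedAddCommGroup F]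
    [NormedSpace ℝ F] {g : ℝ → F} {x : EuclideanSpace ℝ (Fin n)} (hx : x ∈ unitCube n) (i : Fin n)
    (hg : DifferentiableWithinAt ℝ (fun y : EuclideanSpace ℝ (Fin n) => g (y i)) (unitCube n) x) :
    DifferentiableWithinAt ℝ g (Icc 0 1) (x i) := by
  set e : ℝ → EuclideanSpace ℝ (Fin n) := fun t => x + (t - x i) • EuclideanSpace.single i 1
  have he : ∀ t j, e t j = if j = i then t else x j := fun t j => by
    by_cases hj : j = i <;> simp [e, hj]
  have hex : e (x i) = x := by simp [e]
  have hmaps : MapsTo e (Icc 0 1) (unitCube n) := fun t ht j => by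
    rw [he]; split_ifs; exacts [ht, hx j]
  have hde : DifferentiableAt ℝ e (x i) := by fun_prop
  rw [← hex] at hg
  simpa [Function.comp_def, he] using hg.comp (x i) hde.differentiableWithinAt hmaps

/-- For every `n ≥ 1` there exist `c > 0` and a continuous injective map
`h : [0,1]^n → ℝ^{n+1}` with `c ‖x - y‖ ≤ ‖h x - h y‖` for all `x, y ∈ [0,1]^n` which is
differentiable at no point of `[0,1]^n`. -/
theorem stmt_17 (n : ℕ) (hn : 1 ≤ n) :
    ∃ (c : ℝ) (h : EuclideanSpace ℝ (Fin n) → EuclideanSpace ℝ (Fin (n + 1))),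
      0 < c ∧ ContinuousOn h (unitCube n) ∧ Set.InjOn h (unitCube n) ∧
      (∀ x ∈ unitCube n, ∀ y ∈ unitCube n, c * ‖x - y‖ ≤ ‖h x - h y‖) ∧
      (∀ x ∈ unitCube n, ¬ DifferentiableWithinAt ℝ h (unitCube n) x) := by
  set i₀ : Fin n := ⟨0, hn⟩
  set h := fun x : EuclideanSpace ℝ (Fin n) => snocPt x (takagi (x i₀))
  have hlow : ∀ x y, ‖x - y‖ ≤ ‖h x - h y‖ := fun x y => by
    simpa only [h, snocPt_sub] using norm_le_norm_snocPt (x - y) _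
  refine ⟨1, h, one_pos, ?_, fun x _ y _ hxy => ?_, fun x _ y _ => ?_, fun x hx hd => ?_⟩
  · exact (continuous_id.snocPt
      (continuous_takagi.comp (EuclideanSpace.proj i₀).continuous)).continuousOn
  · simpa [hxy, sub_eq_zero] using hlow x y
  · simpa using hlow x y
  · have hlast : DifferentiableWithinAt ℝ (fun y : EuclideanSpace ℝ (Fin n) => takagi (y i₀))
        (unitCube n) x := by
      simpa [Function.comp_def, h] using
        (EuclideanSpace.proj (Fin.last n)).differentiableAt.comp_differentiableWithinAt x hd
    exact not_differentiableWithinAt_takagi (hx i₀) (hlast.of_comp_apply_unitCube hx i₀)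

end
end
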